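/- arXiv:1301.6926 — 5 statements merged into one kernel-verified Lean document; each statement's English description precedes it below -/
import Mathlib

section
/- For any cover of the Tietze graph T by 4 perfect matchings, each edge of the unique triangle of T belongs to precisely one of the four perfect matchings. -/
open SimpleGraph

/-- A graph is cubic (3-regular) if every vertex has exactly 3 neighbours. -/
def IsCubic {V : Type*} (G : SimpleGraph V) : Prop :=
  ∀ v : V, (G.neighborSet v).ncard = 3

/-- A graph is bridgeless if it has no cut-edge. -/
def IsBridgeless {V : Type*} (G : SimpleGraph V) : Prop :=
  ∀ e : Sym2 V, ¬ G.IsBridge e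

/-- The edge set of `G` can be covered by `k` perfect matchings. -/
def CoverByPM {V : Type*} (G : SimpleGraph V) (k : ℕ) : Prop :=
  ∃ M : Fin k → G.Subgraph,
    (∀ i, (M i).IsPerfectMatching) ∧ (⋃ i, (M i).edgeSet) = G.edgeSet

/-- The excessive index of `G`: the least number of perfect matchings needed to
cover the edge set of `G` (`⊤` if there is no such cover). -/
noncomputable def excessiveIndex {V : Type*} (G : SimpleGraph V) : ℕ∞ :=
  sInf {k : ℕ∞ | ∃ n : ℕ, k = n ∧ CoverByPM G n}

/-- `G` has a proper edge colouring with `n` colours. -/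
def ProperEdgeColorable {V : Type*} (G : SimpleGraph V) (n : ℕ) : Prop :=
  ∃ c : Sym2 V → Fin n, ∀ e ∈ G.edgeSet, ∀ f ∈ G.edgeSet,
    e ≠ f → (∃ v : V, v ∈ e ∧ v ∈ f) → c e ≠ c f

/-- The set of edges of `G` with one end-vertex in `A` and the other in `B`. -/
def edgesBetween {V : Type*} (G : SimpleGraph V) (A B : Set V) : Set (Sym2 V) :=
  {e | ∃ a b, G.Adj a b ∧ a ∈ A ∧ b ∈ B ∧ e = s(a, b)}

/-- The set of edges of `G` with exactly one end-vertex in `A`. -/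
def edgeBoundary {V : Type*} (G : SimpleGraph V) (A : Set V) : Set (Sym2 V) :=
  edgesBetween G A Aᶜ

/-- The subgraph induced on `A` contains a cycle. -/
def HasCycleOn {V : Type*} (G : SimpleGraph V) (A : Set V) : Prop :=
  ¬ (G.induce A).IsAcyclic

/-- `G` is cyclically `k`-edge-connected: there is no edge-cut with fewer than `k`
edges separating two parts each containing a cycle. -/
def CyclicallyEdgeConnected {V : Type*} (G : SimpleGraph V) (k : ℕ) : Prop :=
  ∀ A : Set V, HasCycleOn G A → HasCycleOn G Aᶜ → k ≤ (edgeBoundary G A).ncard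

/-- A snark: a cubic, cyclically 4-edge-connected graph of girth at least five
that is not 3-edge-colourable. -/
def IsSnark {V : Type*} (G : SimpleGraph V) : Prop :=
  IsCubic G ∧ CyclicallyEdgeConnected G 4 ∧ 5 ≤ G.girth ∧ ¬ ProperEdgeColorable G 3

/-- Adjacency list of the Tietze graph, obtained from the Petersen graph by
replacing one vertex by a triangle: here `0,…,4` is the inner pentagram,
`5,…,8` the remaining outer path, and `9,10,11` the triangle (its unique one). -/
def tietzeRel : Fin 12 → Fin 12 → Prop := fun a b =>
  ((a : ℕ), (b : ℕ)) ∈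
    [(0,2),(2,4),(4,1),(1,3),(3,0),(5,6),(6,7),(7,8),(5,1),(6,2),(7,3),(8,4),
     (11,0),(9,10),(10,11),(9,11),(9,5),(10,8)]

instance : DecidableRel tietzeRel := fun _ _ => by unfold tietzeRel; infer_instance

/-- The Tietze graph (the Petersen graph with one vertex replaced by a triangle). -/
def tietze : SimpleGraph (Fin 12) := SimpleGraph.fromRel tietzeRel

instance : DecidableRel tietze.Adj := fun a b =>
  decidable_of_iff _ (SimpleGraph.fromRel_adj tietzeRel a b).symm

def pmN : ℕ :=
  2735545769670925140253742265935844301425065129444673236510563645895368027412358648503637206056886687858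

def pmv (j v : ℕ) : ℕ := pmN / 12 ^ (12 * j + v) % 12

def pmTab (j : Fin 8) (v : Fin 12) : Fin 12 :=
  ⟨pmv j.1 v.1, Nat.mod_lt _ (by norm_num)⟩

lemma classify (f : Fin 12 → Fin 12) (h1 : ∀ v, tietze.Adj v (f v))
    (h2 : ∀ v, f (f v) = v) : ∃ j : Fin 8, ∀ v, f v = pmTab j v := by
  have t0 : ∀ w : Fin 12, tietze.Adj 0 w → w = 2 ∨ w = 3 ∨ w = 11 := by decide
  have t1 : ∀ w : Fin 12, tietze.Adj 1 w → w = 4 ∨ w = 3 ∨ w = 5 := by decide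
  have t2 : ∀ w : Fin 12, tietze.Adj 2 w → w = 0 ∨ w = 4 ∨ w = 6 := by decide
  have t3 : ∀ w : Fin 12, tietze.Adj 3 w → w = 1 ∨ w = 0 ∨ w = 7 := by decide
  have t4 : ∀ w : Fin 12, tietze.Adj 4 w → w = 2 ∨ w = 1 ∨ w = 8 := by decide
  have t5 : ∀ w : Fin 12, tietze.Adj 5 w → w = 6 ∨ w = 1 ∨ w = 9 := by decide
  have t6 : ∀ w : Fin 12, tietze.Adj 6 w → w = 5 ∨ w = 7 ∨ w = 2 := by decide
  have t7 : ∀ w : Fin 12, tietze.Adj 7 w → w = 6 ∨ w = 8 ∨ w = 3 := by decide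
  have t8 : ∀ w : Fin 12, tietze.Adj 8 w → w = 7 ∨ w = 4 ∨ w = 10 := by decide
  have t9 : ∀ w : Fin 12, tietze.Adj 9 w → w = 10 ∨ w = 11 ∨ w = 5 := by decide
  have t10 : ∀ w : Fin 12, tietze.Adj 10 w → w = 9 ∨ w = 11 ∨ w = 8 := by decide
  have t11 : ∀ w : Fin 12, tietze.Adj 11 w → w = 0 ∨ w = 10 ∨ w = 9 := by decide
  rcases t0 (f 0) (h1 0) with h|h|h
  · have p0 : f 0 = 2 := h
    have p2 : f 2 = 0 := by have hh := h2 0; rw [p0] at hh; exact hh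
    rcases t3 (f 3) (h1 3) with h|h|h
    · have p3 : f 3 = 1 := h
      have p1 : f 1 = 3 := by have hh := h2 3; rw [p3] at hh; exact hh
      rcases t4 (f 4) (h1 4) with h|h|h
      · have hc : f 2 = 4 := by have hh := h2 4; rw [h] at hh; exact hh
        exact absurd (p2.symm.trans hc) (by decide)
      · have hc : f 1 = 4 := by have hh := h2 4; rw [h] at hh; exact hh
        exact absurd (p1.symm.trans hc) (by decide)
      · have p4 : f 4 = 8 := h
        have p8 : f 8 = 4 := by have hh := h2 4; rw [p4] at hh; exact hh
        rcases t7 (f 7) (h1 7) with h|h|h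
        · have p7 : f 7 = 6 := h
          have p6 : f 6 = 7 := by have hh := h2 7; rw [p7] at hh; exact hh
          rcases t5 (f 5) (h1 5) with h|h|h
          · have hc : f 6 = 5 := by have hh := h2 5; rw [h] at hh; exact hh
            exact absurd (p6.symm.trans hc) (by decide)
          · have hc : f 1 = 5 := by have hh := h2 5; rw [h] at hh; exact hh
            exact absurd (p1.symm.trans hc) (by decide)
          · have p5 : f 5 = 9 := h
            have p9 : f 9 = 5 := by have hh := h2 5; rw [p5] at hh; exact hh
            rcases t10 (f 10) (h1 10) with h|h|h
            · have hc : f 9 = 10 := by have hh := h2 10; rw [h] at hh; exact hh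
              exact absurd (p9.symm.trans hc) (by decide)
            · have p10 : f 10 = 11 := h
              have p11 : f 11 = 10 := by have hh := h2 10; rw [p10] at hh; exact hh
              exact ⟨1, by intro v; fin_cases v <;> assumption⟩
            · have hc : f 8 = 10 := by have hh := h2 10; rw [h] at hh; exact hh
              exact absurd (p8.symm.trans hc) (by decide)
        · have hc : f 8 = 7 := by have hh := h2 7; rw [h] at hh; exact hh
          exact absurd (p8.symm.trans hc) (by decide)
        · have hc : f 3 = 7 := by have hh := h2 7; rw [h] at hh; exact hh
          exact absurd (p3.symm.trans hc) (by decide)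
    · have hc : f 0 = 3 := by have hh := h2 3; rw [h] at hh; exact hh
      exact absurd (p0.symm.trans hc) (by decide)
    · have p3 : f 3 = 7 := h
      have p7 : f 7 = 3 := by have hh := h2 3; rw [p3] at hh; exact hh
      rcases t6 (f 6) (h1 6) with h|h|h
      · have p6 : f 6 = 5 := h
        have p5 : f 5 = 6 := by have hh := h2 6; rw [p6] at hh; exact hh
        rcases t1 (f 1) (h1 1) with h|h|h
        · have p1 : f 1 = 4 := h
          have p4 : f 4 = 1 := by have hh := h2 1; rw [p1] at hh; exact hh
          rcases t8 (f 8) (h1 8) with h|h|h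
          · have hc : f 7 = 8 := by have hh := h2 8; rw [h] at hh; exact hh
            exact absurd (p7.symm.trans hc) (by decide)
          · have hc : f 4 = 8 := by have hh := h2 8; rw [h] at hh; exact hh
            exact absurd (p4.symm.trans hc) (by decide)
          · have p8 : f 8 = 10 := h
            have p10 : f 10 = 8 := by have hh := h2 8; rw [p8] at hh; exact hh
            rcases t9 (f 9) (h1 9) with h|h|h
            · have hc : f 10 = 9 := by have hh := h2 9; rw [h] at hh; exact hh
              exact absurd (p10.symm.trans hc) (by decide)
            · have p9 : f 9 = 11 := h
              have p11 : f 11 = 9 := by have hh := h2 9; rw [p9] at hh; exact hh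
              exact ⟨0, by intro v; fin_cases v <;> assumption⟩
            · have hc : f 5 = 9 := by have hh := h2 9; rw [h] at hh; exact hh
              exact absurd (p5.symm.trans hc) (by decide)
        · have hc : f 3 = 1 := by have hh := h2 1; rw [h] at hh; exact hh
          exact absurd (p3.symm.trans hc) (by decide)
        · have hc : f 5 = 1 := by have hh := h2 1; rw [h] at hh; exact hh
          exact absurd (p5.symm.trans hc) (by decide)
      · have hc : f 7 = 6 := by have hh := h2 6; rw [h] at hh; exact hh
        exact absurd (p7.symm.trans hc) (by decide)
      · have hc : f 2 = 6 := by have hh := h2 6; rw [h] at hh; exact hh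
        exact absurd (p2.symm.trans hc) (by decide)
  · have p0 : f 0 = 3 := h
    have p3 : f 3 = 0 := by have hh := h2 0; rw [p0] at hh; exact hh
    rcases t1 (f 1) (h1 1) with h|h|h
    · have p1 : f 1 = 4 := h
      have p4 : f 4 = 1 := by have hh := h2 1; rw [p1] at hh; exact hh
      rcases t2 (f 2) (h1 2) with h|h|h
      · have hc : f 0 = 2 := by have hh := h2 2; rw [h] at hh; exact hh
        exact absurd (p0.symm.trans hc) (by decide)
      · have hc : f 4 = 2 := by have hh := h2 2; rw [h] at hh; exact hh
        exact absurd (p4.symm.trans hc) (by decide)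
      · have p2 : f 2 = 6 := h
        have p6 : f 6 = 2 := by have hh := h2 2; rw [p2] at hh; exact hh
        rcases t5 (f 5) (h1 5) with h|h|h
        · have hc : f 6 = 5 := by have hh := h2 5; rw [h] at hh; exact hh
          exact absurd (p6.symm.trans hc) (by decide)
        · have hc : f 1 = 5 := by have hh := h2 5; rw [h] at hh; exact hh
          exact absurd (p1.symm.trans hc) (by decide)
        · have p5 : f 5 = 9 := h
          have p9 : f 9 = 5 := by have hh := h2 5; rw [p5] at hh; exact hh
          rcases t7 (f 7) (h1 7) with h|h|h
          · have hc : f 6 = 7 := by have hh := h2 7; rw [h] at hh; exact hh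
            exact absurd (p6.symm.trans hc) (by decide)
          · have p7 : f 7 = 8 := h
            have p8 : f 8 = 7 := by have hh := h2 7; rw [p7] at hh; exact hh
            rcases t10 (f 10) (h1 10) with h|h|h
            · have hc : f 9 = 10 := by have hh := h2 10; rw [h] at hh; exact hh
              exact absurd (p9.symm.trans hc) (by decide)
            · have p10 : f 10 = 11 := h
              have p11 : f 11 = 10 := by have hh := h2 10; rw [p10] at hh; exact hh
              exact ⟨2, by intro v; fin_cases v <;> assumption⟩
            · have hc : f 8 = 10 := by have hh := h2 10; rw [h] at hh; exact hh
              exact absurd (p8.symm.trans hc) (by decide)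
          · have hc : f 3 = 7 := by have hh := h2 7; rw [h] at hh; exact hh
            exact absurd (p3.symm.trans hc) (by decide)
    · have hc : f 3 = 1 := by have hh := h2 1; rw [h] at hh; exact hh
      exact absurd (p3.symm.trans hc) (by decide)
    · have p1 : f 1 = 5 := h
      have p5 : f 5 = 1 := by have hh := h2 1; rw [p1] at hh; exact hh
      rcases t2 (f 2) (h1 2) with h|h|h
      · have hc : f 0 = 2 := by have hh := h2 2; rw [h] at hh; exact hh
        exact absurd (p0.symm.trans hc) (by decide)
      · have p2 : f 2 = 4 := h
        have p4 : f 4 = 2 := by have hh := h2 2; rw [p2] at hh; exact hh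
        rcases t6 (f 6) (h1 6) with h|h|h
        · have hc : f 5 = 6 := by have hh := h2 6; rw [h] at hh; exact hh
          exact absurd (p5.symm.trans hc) (by decide)
        · have p6 : f 6 = 7 := h
          have p7 : f 7 = 6 := by have hh := h2 6; rw [p6] at hh; exact hh
          rcases t8 (f 8) (h1 8) with h|h|h
          · have hc : f 7 = 8 := by have hh := h2 8; rw [h] at hh; exact hh
            exact absurd (p7.symm.trans hc) (by decide)
          · have hc : f 4 = 8 := by have hh := h2 8; rw [h] at hh; exact hh
            exact absurd (p4.symm.trans hc) (by decide)
          · have p8 : f 8 = 10 := h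
            have p10 : f 10 = 8 := by have hh := h2 8; rw [p8] at hh; exact hh
            rcases t9 (f 9) (h1 9) with h|h|h
            · have hc : f 10 = 9 := by have hh := h2 9; rw [h] at hh; exact hh
              exact absurd (p10.symm.trans hc) (by decide)
            · have p9 : f 9 = 11 := h
              have p11 : f 11 = 9 := by have hh := h2 9; rw [p9] at hh; exact hh
              exact ⟨3, by intro v; fin_cases v <;> assumption⟩
            · have hc : f 5 = 9 := by have hh := h2 9; rw [h] at hh; exact hh
              exact absurd (p5.symm.trans hc) (by decide)
        · have hc : f 2 = 6 := by have hh := h2 6; rw [h] at hh; exact hh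
          exact absurd (p2.symm.trans hc) (by decide)
      · have p2 : f 2 = 6 := h
        have p6 : f 6 = 2 := by have hh := h2 2; rw [p2] at hh; exact hh
        rcases t4 (f 4) (h1 4) with h|h|h
        · have hc : f 2 = 4 := by have hh := h2 4; rw [h] at hh; exact hh
          exact absurd (p2.symm.trans hc) (by decide)
        · have hc : f 1 = 4 := by have hh := h2 4; rw [h] at hh; exact hh
          exact absurd (p1.symm.trans hc) (by decide)
        · have p4 : f 4 = 8 := h
          have p8 : f 8 = 4 := by have hh := h2 4; rw [p4] at hh; exact hh
          rcases t7 (f 7) (h1 7) with h|h|h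
          · have hc : f 6 = 7 := by have hh := h2 7; rw [h] at hh; exact hh
            exact absurd (p6.symm.trans hc) (by decide)
          · have hc : f 8 = 7 := by have hh := h2 7; rw [h] at hh; exact hh
            exact absurd (p8.symm.trans hc) (by decide)
          · have hc : f 3 = 7 := by have hh := h2 7; rw [h] at hh; exact hh
            exact absurd (p3.symm.trans hc) (by decide)
  · have p0 : f 0 = 11 := h
    have p11 : f 11 = 0 := by have hh := h2 0; rw [p0] at hh; exact hh
    rcases t2 (f 2) (h1 2) with h|h|h
    · have hc : f 0 = 2 := by have hh := h2 2; rw [h] at hh; exact hh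
      exact absurd (p0.symm.trans hc) (by decide)
    · have p2 : f 2 = 4 := h
      have p4 : f 4 = 2 := by have hh := h2 2; rw [p2] at hh; exact hh
      rcases t1 (f 1) (h1 1) with h|h|h
      · have hc : f 4 = 1 := by have hh := h2 1; rw [h] at hh; exact hh
        exact absurd (p4.symm.trans hc) (by decide)
      · have p1 : f 1 = 3 := h
        have p3 : f 3 = 1 := by have hh := h2 1; rw [p1] at hh; exact hh
        rcases t5 (f 5) (h1 5) with h|h|h
        · have p5 : f 5 = 6 := h
          have p6 : f 6 = 5 := by have hh := h2 5; rw [p5] at hh; exact hh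
          rcases t7 (f 7) (h1 7) with h|h|h
          · have hc : f 6 = 7 := by have hh := h2 7; rw [h] at hh; exact hh
            exact absurd (p6.symm.trans hc) (by decide)
          · have p7 : f 7 = 8 := h
            have p8 : f 8 = 7 := by have hh := h2 7; rw [p7] at hh; exact hh
            rcases t9 (f 9) (h1 9) with h|h|h
            · have p9 : f 9 = 10 := h
              have p10 : f 10 = 9 := by have hh := h2 9; rw [p9] at hh; exact hh
              exact ⟨5, by intro v; fin_cases v <;> assumption⟩
            · have hc : f 11 = 9 := by have hh := h2 9; rw [h] at hh; exact hh
              exact absurd (p11.symm.trans hc) (by decide)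
            · have hc : f 5 = 9 := by have hh := h2 9; rw [h] at hh; exact hh
              exact absurd (p5.symm.trans hc) (by decide)
          · have hc : f 3 = 7 := by have hh := h2 7; rw [h] at hh; exact hh
            exact absurd (p3.symm.trans hc) (by decide)
        · have hc : f 1 = 5 := by have hh := h2 5; rw [h] at hh; exact hh
          exact absurd (p1.symm.trans hc) (by decide)
        · have p5 : f 5 = 9 := h
          have p9 : f 9 = 5 := by have hh := h2 5; rw [p5] at hh; exact hh
          rcases t6 (f 6) (h1 6) with h|h|h
          · have hc : f 5 = 6 := by have hh := h2 6; rw [h] at hh; exact hh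
            exact absurd (p5.symm.trans hc) (by decide)
          · have p6 : f 6 = 7 := h
            have p7 : f 7 = 6 := by have hh := h2 6; rw [p6] at hh; exact hh
            rcases t8 (f 8) (h1 8) with h|h|h
            · have hc : f 7 = 8 := by have hh := h2 8; rw [h] at hh; exact hh
              exact absurd (p7.symm.trans hc) (by decide)
            · have hc : f 4 = 8 := by have hh := h2 8; rw [h] at hh; exact hh
              exact absurd (p4.symm.trans hc) (by decide)
            · have p8 : f 8 = 10 := h
              have p10 : f 10 = 8 := by have hh := h2 8; rw [p8] at hh; exact hh
              exact ⟨6, by intro v; fin_cases v <;> assumption⟩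
          · have hc : f 2 = 6 := by have hh := h2 6; rw [h] at hh; exact hh
            exact absurd (p2.symm.trans hc) (by decide)
      · have p1 : f 1 = 5 := h
        have p5 : f 5 = 1 := by have hh := h2 1; rw [p1] at hh; exact hh
        rcases t3 (f 3) (h1 3) with h|h|h
        · have hc : f 1 = 3 := by have hh := h2 3; rw [h] at hh; exact hh
          exact absurd (p1.symm.trans hc) (by decide)
        · have hc : f 0 = 3 := by have hh := h2 3; rw [h] at hh; exact hh
          exact absurd (p0.symm.trans hc) (by decide)
        · have p3 : f 3 = 7 := h
          have p7 : f 7 = 3 := by have hh := h2 3; rw [p3] at hh; exact hh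
          rcases t6 (f 6) (h1 6) with h|h|h
          · have hc : f 5 = 6 := by have hh := h2 6; rw [h] at hh; exact hh
            exact absurd (p5.symm.trans hc) (by decide)
          · have hc : f 7 = 6 := by have hh := h2 6; rw [h] at hh; exact hh
            exact absurd (p7.symm.trans hc) (by decide)
          · have hc : f 2 = 6 := by have hh := h2 6; rw [h] at hh; exact hh
            exact absurd (p2.symm.trans hc) (by decide)
    · have p2 : f 2 = 6 := h
      have p6 : f 6 = 2 := by have hh := h2 2; rw [p2] at hh; exact hh
      rcases t3 (f 3) (h1 3) with h|h|h
      · have p3 : f 3 = 1 := h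
        have p1 : f 1 = 3 := by have hh := h2 3; rw [p3] at hh; exact hh
        rcases t4 (f 4) (h1 4) with h|h|h
        · have hc : f 2 = 4 := by have hh := h2 4; rw [h] at hh; exact hh
          exact absurd (p2.symm.trans hc) (by decide)
        · have hc : f 1 = 4 := by have hh := h2 4; rw [h] at hh; exact hh
          exact absurd (p1.symm.trans hc) (by decide)
        · have p4 : f 4 = 8 := h
          have p8 : f 8 = 4 := by have hh := h2 4; rw [p4] at hh; exact hh
          rcases t7 (f 7) (h1 7) with h|h|h
          · have hc : f 6 = 7 := by have hh := h2 7; rw [h] at hh; exact hh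
            exact absurd (p6.symm.trans hc) (by decide)
          · have hc : f 8 = 7 := by have hh := h2 7; rw [h] at hh; exact hh
            exact absurd (p8.symm.trans hc) (by decide)
          · have hc : f 3 = 7 := by have hh := h2 7; rw [h] at hh; exact hh
            exact absurd (p3.symm.trans hc) (by decide)
      · have hc : f 0 = 3 := by have hh := h2 3; rw [h] at hh; exact hh
        exact absurd (p0.symm.trans hc) (by decide)
      · have p3 : f 3 = 7 := h
        have p7 : f 7 = 3 := by have hh := h2 3; rw [p3] at hh; exact hh
        rcases t1 (f 1) (h1 1) with h|h|h
        · have p1 : f 1 = 4 := h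
          have p4 : f 4 = 1 := by have hh := h2 1; rw [p1] at hh; exact hh
          rcases t5 (f 5) (h1 5) with h|h|h
          · have hc : f 6 = 5 := by have hh := h2 5; rw [h] at hh; exact hh
            exact absurd (p6.symm.trans hc) (by decide)
          · have hc : f 1 = 5 := by have hh := h2 5; rw [h] at hh; exact hh
            exact absurd (p1.symm.trans hc) (by decide)
          · have p5 : f 5 = 9 := h
            have p9 : f 9 = 5 := by have hh := h2 5; rw [p5] at hh; exact hh
            rcases t8 (f 8) (h1 8) with h|h|h
            · have hc : f 7 = 8 := by have hh := h2 8; rw [h] at hh; exact hh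
              exact absurd (p7.symm.trans hc) (by decide)
            · have hc : f 4 = 8 := by have hh := h2 8; rw [h] at hh; exact hh
              exact absurd (p4.symm.trans hc) (by decide)
            · have p8 : f 8 = 10 := h
              have p10 : f 10 = 8 := by have hh := h2 8; rw [p8] at hh; exact hh
              exact ⟨4, by intro v; fin_cases v <;> assumption⟩
        · have hc : f 3 = 1 := by have hh := h2 1; rw [h] at hh; exact hh
          exact absurd (p3.symm.trans hc) (by decide)
        · have p1 : f 1 = 5 := h
          have p5 : f 5 = 1 := by have hh := h2 1; rw [p1] at hh; exact hh
          rcases t4 (f 4) (h1 4) with h|h|h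
          · have hc : f 2 = 4 := by have hh := h2 4; rw [h] at hh; exact hh
            exact absurd (p2.symm.trans hc) (by decide)
          · have hc : f 1 = 4 := by have hh := h2 4; rw [h] at hh; exact hh
            exact absurd (p1.symm.trans hc) (by decide)
          · have p4 : f 4 = 8 := h
            have p8 : f 8 = 4 := by have hh := h2 4; rw [p4] at hh; exact hh
            rcases t9 (f 9) (h1 9) with h|h|h
            · have p9 : f 9 = 10 := h
              have p10 : f 10 = 9 := by have hh := h2 9; rw [p9] at hh; exact hh
              exact ⟨7, by intro v; fin_cases v <;> assumption⟩
            · have hc : f 11 = 9 := by have hh := h2 9; rw [h] at hh; exact hh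
              exact absurd (p11.symm.trans hc) (by decide)
            · have hc : f 5 = 9 := by have hh := h2 9; rw [h] at hh; exact hh
              exact absurd (p5.symm.trans hc) (by decide)

def pairsN : List (ℕ × ℕ) := [(0,2),(2,4),(4,1),(1,3),(3,0),(5,6),(6,7),(7,8),(5,1),(6,2),(7,3),(8,4),(11,0),(9,10),(10,11),(9,11),(9,5),(10,8)]

abbrev covN4 (a b c d : ℕ) : Prop :=
  ∀ p ∈ pairsN, pmv a p.1 = p.2 ∨ pmv b p.1 = p.2 ∨ pmv c p.1 = p.2 ∨ pmv d p.1 = p.2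

abbrev uniq4 (a b c d x y : ℕ) : Prop :=
  ((if pmv a x = y then 1 else 0) + (if pmv b x = y then 1 else 0) +
    (if pmv c x = y then 1 else 0) + (if pmv d x = y then 1 else 0) : ℕ) = 1

set_option maxRecDepth 10000 in
set_option maxHeartbeats 2000000 in
set_option synthInstance.maxSize 512 in
lemma keyN : ∀ a < 8, ∀ b < 8, ∀ c < 8, ∀ d < 8, covN4 a b c d →
    uniq4 a b c d 9 10 ∧ uniq4 a b c d 10 11 ∧ uniq4 a b c d 9 11 := by decide

lemma exu_helper (Q : Fin 4 → Prop) [DecidablePred Q]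
    (h : ((if Q 0 then 1 else 0) + (if Q 1 then 1 else 0) +
      (if Q 2 then 1 else 0) + (if Q 3 then 1 else 0) : ℕ) = 1) : ∃! i, Q i := by
  by_cases h0 : Q 0 <;> by_cases h1 : Q 1 <;> by_cases h2 : Q 2 <;> by_cases h3 : Q 3 <;>
    simp only [h0, h1, h2, h3, if_true, if_false] at h <;>
    first
    | omega
    | exact ⟨0, h0, by intro y hy; fin_cases y <;> first | rfl | exact absurd hy (by assumption)⟩
    | exact ⟨1, h1, by intro y hy; fin_cases y <;> first | rfl | exact absurd hy (by assumption)⟩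
    | exact ⟨2, h2, by intro y hy; fin_cases y <;> first | rfl | exact absurd hy (by assumption)⟩
    | exact ⟨3, h3, by intro y hy; fin_cases y <;> first | rfl | exact absurd hy (by assumption)⟩

/-- For any cover of the Tietze graph by 4 perfect matchings,
each edge of its unique triangle `{9, 10, 11}` belongs to precisely one of the
four perfect matchings. -/
theorem tietze_triangle_once (M : Fin 4 → tietze.Subgraph)
    (hpm : ∀ i, (M i).IsPerfectMatching)
    (hcov : (⋃ i, (M i).edgeSet) = tietze.edgeSet) :
    ∀ e ∈ ({s((9 : Fin 12), 10), s((10 : Fin 12), 11), s((9 : Fin 12), 11)} :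
      Set (Sym2 (Fin 12))), ∃! i : Fin 4, e ∈ (M i).edgeSet := by
  have hpm' : ∀ i v, ∃! w, (M i).Adj v w :=
    fun i => (SimpleGraph.Subgraph.isPerfectMatching_iff).mp (hpm i)
  set F : Fin 4 → Fin 12 → Fin 12 := fun i v => (hpm' i v).choose with hF
  have hFadj : ∀ i v, (M i).Adj v (F i v) := fun i v => (hpm' i v).choose_spec.1
  have hFuniq : ∀ i v w, (M i).Adj v w → w = F i v :=
    fun i v w h => (hpm' i v).choose_spec.2 w h
  have h1 : ∀ i v, tietze.Adj v (F i v) := fun i v => (M i).adj_sub (hFadj i v)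
  have h2 : ∀ i v, F i (F i v) = v :=
    fun i v => (hFuniq i (F i v) v (hFadj i v).symm).symm
  have hcls : ∀ i, ∃ j, ∀ v, F i v = pmTab j v :=
    fun i => classify (F i) (h1 i) (h2 i)
  choose g hg using hcls
  have hmem : ∀ i (a b : Fin 12), (s(a, b) ∈ (M i).edgeSet ↔ pmTab (g i) a = b) := by
    intro i a b
    rw [SimpleGraph.Subgraph.mem_edgeSet]
    constructor
    · intro h
      exact (hg i a).symm.trans (hFuniq i a b h).symm
    · intro h
      have hfa : F i a = b := (hg i a).trans h
      rw [← hfa]; exact hFadj i a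
  have hc : ∀ a b : Fin 12, tietze.Adj a b → ∃ i : Fin 4, pmTab (g i) a = b := by
    intro a b hab
    have hmem' : s(a, b) ∈ ⋃ i, (M i).edgeSet := by rw [hcov]; exact hab
    obtain ⟨i, hi⟩ := Set.mem_iUnion.mp hmem'
    exact ⟨i, (hmem i a b).mp hi⟩
  have hcv : ∀ a b : Fin 12, tietze.Adj a b →
      pmv (g 0).1 a.1 = b.1 ∨ pmv (g 1).1 a.1 = b.1 ∨
        pmv (g 2).1 a.1 = b.1 ∨ pmv (g 3).1 a.1 = b.1 := by
    intro a b hab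
    obtain ⟨i, hi⟩ := hc a b hab
    have hval : pmv (g i).1 a.1 = b.1 := congrArg Fin.val hi
    fin_cases i
    · exact Or.inl hval
    · exact Or.inr (Or.inl hval)
    · exact Or.inr (Or.inr (Or.inl hval))
    · exact Or.inr (Or.inr (Or.inr hval))
  have hcov4 : covN4 (g 0).1 (g 1).1 (g 2).1 (g 3).1 := by
    intro p hp
    fin_cases hp
    · exact hcv 0 2 (by decide)
    · exact hcv 2 4 (by decide)
    · exact hcv 4 1 (by decide)
    · exact hcv 1 3 (by decide)
    · exact hcv 3 0 (by decide)
    · exact hcv 5 6 (by decide)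
    · exact hcv 6 7 (by decide)
    · exact hcv 7 8 (by decide)
    · exact hcv 5 1 (by decide)
    · exact hcv 6 2 (by decide)
    · exact hcv 7 3 (by decide)
    · exact hcv 8 4 (by decide)
    · exact hcv 11 0 (by decide)
    · exact hcv 9 10 (by decide)
    · exact hcv 10 11 (by decide)
    · exact hcv 9 11 (by decide)
    · exact hcv 9 5 (by decide)
    · exact hcv 10 8 (by decide)
  obtain ⟨u1, u2, u3⟩ := keyN (g 0).1 (g 0).isLt (g 1).1 (g 1).isLt (g 2).1 (g 2).isLt
    (g 3).1 (g 3).isLt hcov4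
  have hmem2 : ∀ i (a b : Fin 12), (s(a, b) ∈ (M i).edgeSet ↔ pmv ((g i) : ℕ) a.1 = b.1) :=
    fun i a b => (hmem i a b).trans Fin.ext_iff
  intro e he
  rcases he with rfl | rfl | rfl
  · exact (existsUnique_congr (fun i => hmem2 i 9 10)).mpr
      (exu_helper (fun i => pmv ((g i) : ℕ) 9 = 10) u1)
  · exact (existsUnique_congr (fun i => hmem2 i 10 11)).mpr
      (exu_helper (fun i => pmv ((g i) : ℕ) 10 = 11) u2)
  · exact (existsUnique_congr (fun i => hmem2 i 9 11)).mpr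
      (exu_helper (fun i => pmv ((g i) : ℕ) 9 = 11) u3)
end

section
/- Let G and H be cubic bridgeless graphs, let xy be an edge of G and uv an edge of H. Then the gluing of (G,x,y) and (H,u,v) — the graph obtained from the disjoint union of G and H by deleting the edges xy and uv and adding the edges xu and yv — is a cubic bridgeless graph. -/
open SimpleGraph

/-- The gluing of `(G, x, y)` and `(H, u, v)`: remove the edges `x — y` and
`u — v`, and join `x` to `u` and `y` to `v`. -/
def gluing {V W : Type*} (G : SimpleGraph V) (H : SimpleGraph W) (x y : V) (u v : W) :
    SimpleGraph (V ⊕ W) :=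
  SimpleGraph.fromRel (fun p q =>
    (∃ a b : V, G.Adj a b ∧ s(a, b) ≠ s(x, y) ∧ p = Sum.inl a ∧ q = Sum.inl b) ∨
    (∃ a b : W, H.Adj a b ∧ s(a, b) ≠ s(u, v) ∧ p = Sum.inr a ∧ q = Sum.inr b) ∨
    (p = Sum.inl x ∧ q = Sum.inr u) ∨ (p = Sum.inl y ∧ q = Sum.inr v))

/-!
Vertex degrees are unchanged by the gluing: `x` trades its neighbour `y` for `u`, and so on.
For bridgelessness, deleting one edge from a bridgeless graph leaves it connected. Hence after
deleting an edge of the gluing, each side that does not contain it stays connected (its own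
edge `x — y` resp. `u — v` is not needed), and one of the two cross edges survives. If the
deleted edge lies inside `G`, the missing edge `x — y` of `G` is replaced by the detour
`x — u ⋯ v — y` through `H`.
-/

open Sum

namespace SimpleGraph

variable {V V' : Type*} {G : SimpleGraph V} {G' : SimpleGraph V'}

theorem Reachable.lift (f : V → V') (hf : ∀ ⦃a b⦄, G.Adj a b → G'.Reachable (f a) (f b))
    {a b : V} (h : G.Reachable a b) : G'.Reachable (f a) (f b) := by
  rw [reachable_iff_reflTransGen] at h ⊢
  exact h.lift' f fun c d hcd ↦ (reachable_iff_reflTransGen _ _).1 (hf hcd)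

theorem Iso.isBridge_map_iff (φ : G ≃g G') {e : Sym2 V} :
    G'.IsBridge (e.map φ) ↔ G.IsBridge e := by
  induction e using Sym2.ind with
  | h a b =>
    let ψ : G.deleteEdges {s(a, b)} ≃g G'.deleteEdges {s(φ a, φ b)} :=
      { φ.toEquiv with
        map_rel_iff' := by
          intro c d
          simp [φ.map_adj_iff, φ.injective.eq_iff] }
    rw [Sym2.map_mk, isBridge_iff, isBridge_iff, not_iff_not]
    exact ψ.reachable_iff

theorem Iso.ncard_neighborSet (φ : G ≃g G') (v : V) :
    (G'.neighborSet (φ v)).ncard = (G.neighborSet v).ncard := by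
  rw [← φ.image_neighborSet, Set.ncard_image_of_injective _ φ.injective]

end SimpleGraph

/- `G.IsBridge s(a, b)` only asks that `a` and `b` be disconnected once `s(a, b)` is deleted, so
for non-adjacent `a`, `b` it says that they are disconnected in `G`: bridgeless graphs are
connected, and stay connected after deleting any one edge. -/
theorem IsBridgeless.reachable_deleteEdges {V : Type*} {G : SimpleGraph V} (hG : IsBridgeless G)
    (e : Sym2 V) (a b : V) : (G.deleteEdges {e}).Reachable a b := by
  have hab : G.Reachable a b := (not_not.1 (hG s(a, b))).mono (deleteEdges_le _)
  refine hab.lift id fun c d hcd ↦ ?_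
  by_cases hce : s(c, d) = e
  · subst hce
    exact not_not.1 (hG s(c, d))
  · exact Adj.reachable ((deleteEdges_adj ..).2 ⟨hcd, hce⟩)

variable {V W : Type*} {G : SimpleGraph V} {H : SimpleGraph W} {x y : V} {u v : W}

@[simp]
lemma gluing_adj_inl_inl {a b : V} :
    (gluing G H x y u v).Adj (inl a) (inl b) ↔ G.Adj a b ∧ s(a, b) ≠ s(x, y) := by
  simp [gluing]
  grind [G.adj_comm, Adj.ne]

@[simp]
lemma gluing_adj_inr_inr {a b : W} :
    (gluing G H x y u v).Adj (inr a) (inr b) ↔ H.Adj a b ∧ s(a, b) ≠ s(u, v) := by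
  simp [gluing]
  grind [H.adj_comm, Adj.ne]

@[simp]
lemma gluing_adj_inl_inr {a : V} {b : W} :
    (gluing G H x y u v).Adj (inl a) (inr b) ↔ a = x ∧ b = u ∨ a = y ∧ b = v := by
  simp [gluing]

@[simp]
lemma gluing_adj_inr_inl {a : V} {b : W} :
    (gluing G H x y u v).Adj (inr b) (inl a) ↔ a = x ∧ b = u ∨ a = y ∧ b = v := by
  simp [gluing]

lemma gluing_flip : gluing G H y x v u = gluing G H x y u v := by
  ext (a | a) (b | b) <;> simp [Sym2.eq_swap (a := y)] <;> tauto

variable (G H x y u v) in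
def gluingComm : gluing G H x y u v ≃g gluing H G u v x y where
  toEquiv := Equiv.sumComm V W
  map_rel_iff' := by
    rintro (a | a) (b | b) <;> simp <;> tauto

lemma neighborSet_gluing_inl_left (hxy : x ≠ y) :
    (gluing G H x y u v).neighborSet (inl x) =
      insert (inr u) (inl '' (G.neighborSet x \ {y})) := by
  ext (b | b) <;> simp [hxy]

lemma neighborSet_gluing_inl_of_ne {a : V} (hax : a ≠ x) (hay : a ≠ y) :
    (gluing G H x y u v).neighborSet (inl a) = inl '' G.neighborSet a := by
  ext (b | b) <;> simp [hax, hay]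

lemma ncard_neighborSet_gluing_inl_left (hG : IsCubic G) (hxy : G.Adj x y) :
    ((gluing G H x y u v).neighborSet (inl x)).ncard = 3 := by
  have hfin : (G.neighborSet x).Finite := Set.finite_of_ncard_pos (by rw [hG x]; norm_num)
  rw [neighborSet_gluing_inl_left hxy.ne,
    Set.ncard_insert_of_notMem (by simp) (hfin.sdiff.image _),
    Set.ncard_image_of_injective _ inl_injective,
    Set.ncard_sdiff_singleton_of_mem (s := G.neighborSet x) hxy, hG x]

lemma ncard_neighborSet_gluing_inl (hG : IsCubic G) (hxy : G.Adj x y) (a : V) :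
    ((gluing G H x y u v).neighborSet (inl a)).ncard = 3 := by
  by_cases hax : a = x
  · subst hax
    exact ncard_neighborSet_gluing_inl_left hG hxy
  by_cases hay : a = y
  · rw [hay, ← gluing_flip]
    exact ncard_neighborSet_gluing_inl_left hG hxy.symm
  rw [neighborSet_gluing_inl_of_ne hax hay, Set.ncard_image_of_injective _ inl_injective, hG a]

lemma isCubic_gluing (hG : IsCubic G) (hH : IsCubic H) (hxy : G.Adj x y) (huv : H.Adj u v) :
    IsCubic (gluing G H x y u v) := by
  rintro (a | b)
  · exact ncard_neighborSet_gluing_inl hG hxy a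
  · exact ((gluingComm H G u v x y).ncard_neighborSet (inl b)).trans
      (ncard_neighborSet_gluing_inl hH huv b)

lemma reachable_gluing_deleteEdges_inl (hG : IsBridgeless G) {e : Sym2 (V ⊕ W)}
    (he : ∀ a b, e ≠ s(inl a, inl b)) (c d : V) :
    ((gluing G H x y u v).deleteEdges {e}).Reachable (inl c) (inl d) :=
  (hG.reachable_deleteEdges s(x, y) c d).map
    ⟨inl, fun {a b} hab ↦ by
      rw [deleteEdges_adj, Set.mem_singleton_iff] at hab
      simpa [hab] using (he a b).symm⟩

lemma reachable_gluing_deleteEdges_inr (hH : IsBridgeless H) {e : Sym2 (V ⊕ W)}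
    (he : ∀ a b, e ≠ s(inr a, inr b)) (c d : W) :
    ((gluing G H x y u v).deleteEdges {e}).Reachable (inr c) (inr d) :=
  (hH.reachable_deleteEdges s(u, v) c d).map
    ⟨inr, fun {a b} hab ↦ by
      rw [deleteEdges_adj, Set.mem_singleton_iff] at hab
      simpa [hab] using (he a b).symm⟩

lemma not_isBridge_gluing_inl_inl (hG : IsBridgeless G) (hH : IsBridgeless H) (a b : V) :
    ¬(gluing G H x y u v).IsBridge s(inl a, inl b) := by
  set K := (gluing G H x y u v).deleteEdges {s(inl a, inl b)}
  have hdetour : K.Reachable (inl x) (inl y) := by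
    have hxu : K.Adj (inl x) (inr u) := by simp [K]
    have hvy : K.Adj (inr v) (inl y) := by simp [K]
    exact hxu.reachable.trans
      ((reachable_gluing_deleteEdges_inr hH (by simp) u v).trans hvy.reachable)
  rw [isBridge_iff, not_not]
  refine Reachable.lift inl (fun c d hcd ↦ ?_) (not_not.1 (hG s(a, b)))
  rw [deleteEdges_adj, Set.mem_singleton_iff] at hcd
  by_cases hxy : s(c, d) = s(x, y)
  · rcases Sym2.eq_iff.1 hxy with ⟨rfl, rfl⟩ | ⟨rfl, rfl⟩
    exacts [hdetour, hdetour.symm]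
  · exact Adj.reachable (by simpa [K, hxy] using hcd)

lemma not_isBridge_gluing_inl_inr (hG : IsBridgeless G) (hH : IsBridgeless H) (hxy : x ≠ y)
    (a : V) (b : W) : ¬(gluing G H x y u v).IsBridge s(inl a, inr b) := by
  set K := (gluing G H x y u v).deleteEdges {s(inl a, inr b)}
  have hcross : ∃ c d, K.Adj (inl c) (inr d) := by
    by_cases h : s(inl a, inr b) = (s(inl x, inr u) : Sym2 (V ⊕ W))
    · exact ⟨y, v, by simp [K, h, hxy.symm]⟩
    · exact ⟨x, u, by simp [K, Ne.symm h]⟩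
  obtain ⟨c, d, hcd⟩ := hcross
  rw [isBridge_iff, not_not]
  exact (reachable_gluing_deleteEdges_inl hG (by simp) a c).trans
    (hcd.reachable.trans (reachable_gluing_deleteEdges_inr hH (by simp) d b))

lemma isBridgeless_gluing (hG : IsBridgeless G) (hH : IsBridgeless H) (hxy : x ≠ y) :
    IsBridgeless (gluing G H x y u v) := by
  intro e
  induction e using Sym2.ind with
  | h p q =>
    rcases p with a | a <;> rcases q with b | b
    · exact not_isBridge_gluing_inl_inl hG hH a b
    · exact not_isBridge_gluing_inl_inr hG hH hxy a b
    · rw [Sym2.eq_swap]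
      exact not_isBridge_gluing_inl_inr hG hH hxy b a
    · exact mt ((gluingComm H G u v x y).isBridge_map_iff (e := s(inl a, inl b))).1
        (not_isBridge_gluing_inl_inl hH hG a b)

theorem gluing_isCubic_isBridgeless_general {V W : Type}
    (G : SimpleGraph V) (H : SimpleGraph W) (x y : V) (u v : W)
    (hGc : IsCubic G) (hGb : IsBridgeless G) (hHc : IsCubic H) (hHb : IsBridgeless H)
    (hxy : G.Adj x y) (huv : H.Adj u v) :
    IsCubic (gluing G H x y u v) ∧ IsBridgeless (gluing G H x y u v) :=
  ⟨isCubic_gluing hGc hHc hxy huv, isBridgeless_gluing hGb hHb hxy.ne⟩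

/-- The gluing of two cubic bridgeless graphs along edges
`x — y` and `u — v` is a cubic bridgeless graph. -/
theorem gluing_isCubic_isBridgeless {V W : Type} [Fintype V] [Fintype W]
    (G : SimpleGraph V) (H : SimpleGraph W) (x y : V) (u v : W)
    (hGc : IsCubic G) (hGb : IsBridgeless G) (hHc : IsCubic H) (hHb : IsBridgeless H)
    (hxy : G.Adj x y) (huv : H.Adj u v) :
    IsCubic (gluing G H x y u v) ∧ IsBridgeless (gluing G H x y u v) :=
  gluing_isCubic_isBridgeless_general G H x y u v hGc hGb hHc hHb hxy huv
end

section
/- Let G be obtained from cubic bridgeless graphs G_0, G_1, G_2 by the windmill construction, and fix i ∈ {0,1,2}. If the edge set of G can be covered by k perfect matchings each of which is of type 0 or type 1 on H_i, with at least one of them of type 0 on H_i, then the edge set of G_i can be covered by k perfect matchings. -/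
open SimpleGraph

/-- The data for the windmill construction: three graphs `G i`, each with a
distinguished edge `x i — y i`, where `x0 i, x1 i` are the two neighbours of
`x i` other than `y i`, and `y0 i, y1 i` the two neighbours of `y i` other
than `x i`. -/
structure WindmillData where
  V : Fin 3 → Type
  G : ∀ i, SimpleGraph (V i)
  x : ∀ i, V i
  y : ∀ i, V i
  x0 : ∀ i, V i
  x1 : ∀ i, V i
  y0 : ∀ i, V i
  y1 : ∀ i, V i
  adj_xy : ∀ i, (G i).Adj (x i) (y i)
  adj_xx0 : ∀ i, (G i).Adj (x i) (x0 i)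
  adj_xx1 : ∀ i, (G i).Adj (x i) (x1 i)
  adj_yy0 : ∀ i, (G i).Adj (y i) (y0 i)
  adj_yy1 : ∀ i, (G i).Adj (y i) (y1 i)
  x0_ne_x1 : ∀ i, x0 i ≠ x1 i
  y0_ne_y1 : ∀ i, y0 i ≠ y1 i
  x0_ne_y : ∀ i, x0 i ≠ y i
  x1_ne_y : ∀ i, x1 i ≠ y i
  y0_ne_x : ∀ i, y0 i ≠ x i
  y1_ne_x : ∀ i, y1 i ≠ x i

namespace WindmillData

variable (D : WindmillData)

/-- The vertices of `H i = G i − {x i, y i}`. -/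
def HVert (i : Fin 3) : Type := {v : D.V i // v ≠ D.x i ∧ v ≠ D.y i}

/-- The vertices of the windmill graph: the vertices of `H 0, H 1, H 2`,
the nine new vertices `a i, b i, c i` and the new vertex `u`. -/
def Vert : Type := (Σ i : Fin 3, D.HVert i) ⊕ ((Fin 3 × Fin 3) ⊕ Unit)

/-- A vertex of `H i`, as a vertex of the windmill graph. -/
def hv {i : Fin 3} (v : D.HVert i) : D.Vert := Sum.inl ⟨i, v⟩
/-- The new vertex `a i`. -/
def av (i : Fin 3) : D.Vert := Sum.inr (Sum.inl (i, 0))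
/-- The new vertex `b i`. -/
def bv (i : Fin 3) : D.Vert := Sum.inr (Sum.inl (i, 1))
/-- The new vertex `c i`. -/
def cv (i : Fin 3) : D.Vert := Sum.inr (Sum.inl (i, 2))
/-- The new vertex `u`. -/
def uv : D.Vert := Sum.inr (Sum.inr ())

/-- The vertex `x i ^ 0` of `H i`. -/
def x0v (i : Fin 3) : D.Vert := D.hv ⟨D.x0 i, (D.adj_xx0 i).ne', D.x0_ne_y i⟩
/-- The vertex `x i ^ 1` of `H i`. -/
def x1v (i : Fin 3) : D.Vert := D.hv ⟨D.x1 i, (D.adj_xx1 i).ne', D.x1_ne_y i⟩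
/-- The vertex `y i ^ 0` of `H i`. -/
def y0v (i : Fin 3) : D.Vert := D.hv ⟨D.y0 i, D.y0_ne_x i, (D.adj_yy0 i).ne'⟩
/-- The vertex `y i ^ 1` of `H i`. -/
def y1v (i : Fin 3) : D.Vert := D.hv ⟨D.y1 i, D.y1_ne_x i, (D.adj_yy1 i).ne'⟩

/-- The adjacency relation of the windmill construction: edges inside each `H i`;
`a i` joined to `x (i+1) ^ 0` and `y (i-1) ^ 0`; `b i` joined to `x (i+1) ^ 1`
and `y (i-1) ^ 1`; and `c i` joined to `a i`, `b i` and `u`. -/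
def rel : D.Vert → D.Vert → Prop := fun p q =>
  (∃ (i : Fin 3) (v w : D.HVert i), (D.G i).Adj v.1 w.1 ∧ p = D.hv v ∧ q = D.hv w) ∨
  (∃ i : Fin 3, p = D.av i ∧ q = D.x0v (i + 1)) ∨
  (∃ i : Fin 3, p = D.av i ∧ q = D.y0v (i - 1)) ∨
  (∃ i : Fin 3, p = D.bv i ∧ q = D.x1v (i + 1)) ∨
  (∃ i : Fin 3, p = D.bv i ∧ q = D.y1v (i - 1)) ∨
  (∃ i : Fin 3, p = D.cv i ∧ (q = D.av i ∨ q = D.bv i ∨ q = D.uv))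

/-- The graph obtained from `G 0, G 1, G 2` by the windmill construction. -/
def graph : SimpleGraph D.Vert := SimpleGraph.fromRel D.rel

/-- The set of vertices of `H i` inside the windmill graph. -/
def Hset (i : Fin 3) : Set D.Vert := {p | ∃ v : D.HVert i, p = D.hv v}

/-- The set `A i = {a i, b i, c i}`. -/
def Aset (i : Fin 3) : Set D.Vert := {D.av i, D.bv i, D.cv i}

/-- A set of edges is of type 0 on `H i` if it misses `∂ H i`. -/
def Type0On (M : Set (Sym2 D.Vert)) (i : Fin 3) : Prop :=
  (M ∩ edgeBoundary D.graph (D.Hset i)).ncard = 0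

/-- A set of edges is of type 1 on `H i` if it has exactly one edge to
`A (i-1)` and exactly one edge to `A (i+1)`. -/
def Type1On (M : Set (Sym2 D.Vert)) (i : Fin 3) : Prop :=
  (M ∩ edgesBetween D.graph (D.Hset i) (D.Aset (i - 1))).ncard = 1 ∧
  (M ∩ edgesBetween D.graph (D.Hset i) (D.Aset (i + 1))).ncard = 1

/-- A set of edges is of type 2 on `H i` if it has exactly two edges in
`∂ H i` but is not of type 1. -/
def Type2On (M : Set (Sym2 D.Vert)) (i : Fin 3) : Prop :=
  (M ∩ edgeBoundary D.graph (D.Hset i)).ncard = 2 ∧ ¬ D.Type1On M i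

/-- For `i ≠ j`, the edge connecting `H i` to `a j`. -/
def eEdge (i j : Fin 3) : Sym2 D.Vert :=
  if i = j + 1 then s(D.av j, D.x0v i) else s(D.av j, D.y0v i)

/-- For `i ≠ j`, the edge connecting `H i` to `b j`. -/
def fEdge (i j : Fin 3) : Sym2 D.Vert :=
  if i = j + 1 then s(D.bv j, D.x1v i) else s(D.bv j, D.y1v i)

end WindmillData

/-!
A perfect matching `M` of the windmill graph that is of type 0 or 1 on `H i` induces a perfect
matching of `G i`: keep the edges of `M` inside `H i`, replace an edge of `M` joining `x i ^ 0`
(`x i ^ 1`, `y i ^ 0`, `y i ^ 1`) to `A (i - 1)` or `A (i + 1)` by the edge `x i — x i ^ 0`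
(`x i — x i ^ 1`, `y i — y i ^ 0`, `y i — y i ^ 1`), and add `x i — y i` when `M` misses `∂ H i`.
The type condition says precisely that `x i` and `y i` then get exactly one edge each. Since `G i`
is cubic, every edge of `G i` other than `x i — y i` arises in this way from an edge of the
windmill graph, so the induced matchings of a cover cover `G i`, the edge `x i — y i` being
covered by the matching induced by a member of type 0.
-/

theorem Fin.sub_one_ne_add_one (i : Fin 3) : i - 1 ≠ i + 1 := by
  revert i; decide

theorem Set.xor_mem_of_ncard_inter_pair_eq_one {α : Type*} {s : Set α} {a b : α} (hab : a ≠ b)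
    (h : (s ∩ {a, b}).ncard = 1) : Xor (a ∈ s) (b ∈ s) := by
  obtain ⟨c, hc⟩ := Set.ncard_eq_one.mp h
  have key : ∀ z, z ∈ s ∧ (z = a ∨ z = b) ↔ z = c := fun z => by
    simpa using Set.ext_iff.mp hc z
  have := (key c).mpr rfl
  grind [Xor]

theorem SimpleGraph.neighborSet_eq_of_ncard_eq_three {V : Type*} {G : SimpleGraph V}
    {v a b c : V} (h : (G.neighborSet v).ncard = 3) (ha : G.Adj v a) (hb : G.Adj v b)
    (hc : G.Adj v c) (hab : a ≠ b) (hac : a ≠ c) (hbc : b ≠ c) :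
    G.neighborSet v = {a, b, c} := by
  refine (Set.eq_of_subset_of_ncard_le ?_ ?_ (Set.finite_of_ncard_ne_zero (by omega))).symm
  · rintro z (rfl | rfl | rfl) <;> assumption
  · rw [h, Set.ncard_eq_three.mpr ⟨a, b, c, hab, hac, hbc, rfl⟩]

theorem existsUnique_of_imp_of_xor {α : Type*} {a b c : α} {P Q R : Prop}
    (h₁ : P → ¬Q ∧ ¬R) (h₂ : ¬P → Xor Q R) :
    ∃! w, w = a ∧ P ∨ w = b ∧ Q ∨ w = c ∧ R := by
  by_cases hP : P
  · exact ⟨a, Or.inl ⟨rfl, hP⟩, by grind⟩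
  · rcases h₂ hP with ⟨hQ, hR⟩ | ⟨hR, hQ⟩
    · exact ⟨b, Or.inr (Or.inl ⟨rfl, hQ⟩), by grind⟩
    · exact ⟨c, Or.inr (Or.inr ⟨rfl, hR⟩), by grind⟩

namespace WindmillData

variable (D : WindmillData) {i : Fin 3}

lemma hv_injective : Function.Injective (D.hv (i := i)) := fun _ _ h => by cases h; rfl
lemma av_injective : Function.Injective D.av := fun _ _ h => by cases h; rfl
lemma bv_injective : Function.Injective D.bv := fun _ _ h => by cases h; rfl
lemma hv_ne_av {j : Fin 3} (v : D.HVert i) : D.hv v ≠ D.av j := Sum.inl_ne_inr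
lemma hv_ne_bv {j : Fin 3} (v : D.HVert i) : D.hv v ≠ D.bv j := Sum.inl_ne_inr
lemma av_ne_bv {j k : Fin 3} : D.av j ≠ D.bv k := fun h => by cases h

lemma hv_notMem_Aset {j : Fin 3} (v : D.HVert i) : D.hv v ∉ D.Aset j := by
  rintro (h | h | h) <;> cases h

lemma av_mem_Aset {j k : Fin 3} : D.av j ∈ D.Aset k ↔ j = k := by
  refine ⟨?_, fun h => Or.inl (congrArg D.av h)⟩
  rintro (h | h | (h : D.av j = D.cv k))
  · exact D.av_injective h
  all_goals cases h

lemma bv_mem_Aset {j k : Fin 3} : D.bv j ∈ D.Aset k ↔ j = k := by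
  refine ⟨?_, fun h => Or.inr (Or.inl (congrArg D.bv h))⟩
  rintro (h | (h : D.bv j = D.bv k) | (h : D.bv j = D.cv k))
  · cases h
  · exact D.bv_injective h
  · cases h

lemma cv_mem_Aset {j k : Fin 3} : D.cv j ∈ D.Aset k ↔ j = k := by
  refine ⟨?_, fun h => Or.inr (Or.inr (congrArg D.cv h))⟩
  rintro (h | h | (h : D.cv j = D.cv k))
  · cases h
  · cases h
  · cases h; rfl

lemma eq_of_mem_Aset {p : D.Vert} {j k : Fin 3} (hj : p ∈ D.Aset j) (hk : p ∈ D.Aset k) :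
    j = k := by
  rcases hj with rfl | rfl | rfl
  exacts [D.av_mem_Aset.mp hk, D.bv_mem_Aset.mp hk, D.cv_mem_Aset.mp hk]

lemma Aset_subset_compl_Hset (i j : Fin 3) : D.Aset j ⊆ (D.Hset i)ᶜ := by
  rintro p hp ⟨v, rfl⟩
  exact D.hv_notMem_Aset v hp

lemma edge_av_ne_edge_bv {j k : Fin 3} (v w : D.HVert i) :
    s(D.av j, D.hv v) ≠ s(D.bv k, D.hv w) := by
  rw [Ne, Sym2.eq_iff]
  rintro (⟨h, -⟩ | ⟨h, -⟩)
  exacts [D.av_ne_bv h, (D.hv_ne_av w) h.symm]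

lemma adj_hv_hv {v w : D.HVert i} (h : (D.G i).Adj v.1 w.1) :
    D.graph.Adj (D.hv v) (D.hv w) :=
  ⟨fun hvw => h.ne (congrArg Subtype.val (D.hv_injective hvw)),
    Or.inl (Or.inl ⟨i, v, w, h, rfl, rfl⟩)⟩

lemma adj_av_x0v (i : Fin 3) : D.graph.Adj (D.av (i - 1)) (D.x0v i) :=
  ⟨(D.hv_ne_av _).symm, Or.inl (Or.inr (Or.inl ⟨i - 1, rfl, by rw [sub_add_cancel]⟩))⟩

lemma adj_bv_x1v (i : Fin 3) : D.graph.Adj (D.bv (i - 1)) (D.x1v i) :=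
  ⟨(D.hv_ne_bv _).symm,
    Or.inl (Or.inr (Or.inr (Or.inr (Or.inl ⟨i - 1, rfl, by rw [sub_add_cancel]⟩))))⟩

lemma adj_av_y0v (i : Fin 3) : D.graph.Adj (D.av (i + 1)) (D.y0v i) :=
  ⟨(D.hv_ne_av _).symm,
    Or.inl (Or.inr (Or.inr (Or.inl ⟨i + 1, rfl, by rw [add_sub_cancel_right]⟩)))⟩

lemma adj_bv_y1v (i : Fin 3) : D.graph.Adj (D.bv (i + 1)) (D.y1v i) :=
  ⟨(D.hv_ne_bv _).symm,
    Or.inl (Or.inr (Or.inr (Or.inr (Or.inr (Or.inl ⟨i + 1, rfl, by rw [add_sub_cancel_right]⟩)))))⟩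

lemma adj_hv_cases {v : D.HVert i} {q : D.Vert} (h : D.graph.Adj (D.hv v) q) :
    (∃ w : D.HVert i, (D.G i).Adj v.1 w.1 ∧ q = D.hv w) ∨
    (v.1 = D.x0 i ∧ q = D.av (i - 1)) ∨ (v.1 = D.x1 i ∧ q = D.bv (i - 1)) ∨
    (v.1 = D.y0 i ∧ q = D.av (i + 1)) ∨ (v.1 = D.y1 i ∧ q = D.bv (i + 1)) := by
  obtain ⟨-, h | h⟩ := h
  · rcases h with ⟨j, v', w, hadj, h1, rfl⟩ | ⟨j, h1, -⟩ | ⟨j, h1, -⟩ | ⟨j, h1, -⟩ |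
      ⟨j, h1, -⟩ | ⟨j, h1, -⟩ <;> cases h1
    exact Or.inl ⟨w, hadj, rfl⟩
  · rcases h with ⟨j, v', w, hadj, rfl, h2⟩ | ⟨j, rfl, h2⟩ | ⟨j, rfl, h2⟩ | ⟨j, rfl, h2⟩ |
      ⟨j, rfl, h2⟩ | ⟨j, -, h2 | h2 | h2⟩ <;> cases h2 <;> simp
    exact Or.inl ⟨v', hadj.symm, rfl⟩

lemma edgesBetween_Hset_Aset_sub_one (i : Fin 3) :
    edgesBetween D.graph (D.Hset i) (D.Aset (i - 1)) =
      {s(D.av (i - 1), D.x0v i), s(D.bv (i - 1), D.x1v i)} := by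
  ext e
  constructor
  · rintro ⟨_, q, hadj, ⟨⟨v, hv⟩, rfl⟩, hq, rfl⟩
    rcases D.adj_hv_cases hadj with
      ⟨w, -, rfl⟩ | ⟨rfl, rfl⟩ | ⟨rfl, rfl⟩ | ⟨rfl, rfl⟩ | ⟨rfl, rfl⟩
    · exact absurd hq (D.hv_notMem_Aset w)
    · exact Or.inl Sym2.eq_swap
    · exact Or.inr Sym2.eq_swap
    · exact absurd (D.av_mem_Aset.mp hq) (Fin.sub_one_ne_add_one i).symm
    · exact absurd (D.bv_mem_Aset.mp hq) (Fin.sub_one_ne_add_one i).symm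
  · rintro (rfl | rfl)
    · exact ⟨_, _, (D.adj_av_x0v i).symm, ⟨_, rfl⟩, Or.inl rfl, Sym2.eq_swap⟩
    · exact ⟨_, _, (D.adj_bv_x1v i).symm, ⟨_, rfl⟩, Or.inr (Or.inl rfl), Sym2.eq_swap⟩

lemma edgesBetween_Hset_Aset_add_one (i : Fin 3) :
    edgesBetween D.graph (D.Hset i) (D.Aset (i + 1)) =
      {s(D.av (i + 1), D.y0v i), s(D.bv (i + 1), D.y1v i)} := by
  ext e
  constructor
  · rintro ⟨_, q, hadj, ⟨⟨v, hv⟩, rfl⟩, hq, rfl⟩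
    rcases D.adj_hv_cases hadj with
      ⟨w, -, rfl⟩ | ⟨rfl, rfl⟩ | ⟨rfl, rfl⟩ | ⟨rfl, rfl⟩ | ⟨rfl, rfl⟩
    · exact absurd hq (D.hv_notMem_Aset w)
    · exact absurd (D.av_mem_Aset.mp hq) (Fin.sub_one_ne_add_one i)
    · exact absurd (D.bv_mem_Aset.mp hq) (Fin.sub_one_ne_add_one i)
    · exact Or.inl Sym2.eq_swap
    · exact Or.inr Sym2.eq_swap
  · rintro (rfl | rfl)
    · exact ⟨_, _, (D.adj_av_y0v i).symm, ⟨_, rfl⟩, Or.inl rfl, Sym2.eq_swap⟩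
    · exact ⟨_, _, (D.adj_bv_y1v i).symm, ⟨_, rfl⟩, Or.inr (Or.inl rfl), Sym2.eq_swap⟩

lemma edgeBoundary_Hset (i : Fin 3) :
    edgeBoundary D.graph (D.Hset i) =
      edgesBetween D.graph (D.Hset i) (D.Aset (i - 1)) ∪
        edgesBetween D.graph (D.Hset i) (D.Aset (i + 1)) := by
  refine subset_antisymm ?_ (Set.union_subset ?_ ?_)
  · rintro _ ⟨_, q, hadj, ⟨v, rfl⟩, hq, rfl⟩
    rcases D.adj_hv_cases hadj with ⟨w, -, rfl⟩ | ⟨-, rfl⟩ | ⟨-, rfl⟩ | ⟨-, rfl⟩ | ⟨-, rfl⟩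
    · exact absurd ⟨w, rfl⟩ hq
    · exact Or.inl ⟨_, _, hadj, ⟨v, rfl⟩, Or.inl rfl, rfl⟩
    · exact Or.inl ⟨_, _, hadj, ⟨v, rfl⟩, Or.inr (Or.inl rfl), rfl⟩
    · exact Or.inr ⟨_, _, hadj, ⟨v, rfl⟩, Or.inl rfl, rfl⟩
    · exact Or.inr ⟨_, _, hadj, ⟨v, rfl⟩, Or.inr (Or.inl rfl), rfl⟩
  all_goals
    rintro _ ⟨p, q, hadj, hp, hq, rfl⟩
    exact ⟨p, q, hadj, hp, D.Aset_subset_compl_Hset i _ hq, rfl⟩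

lemma ne_xy_or_eq_x_or_eq_y (v : D.V i) :
    (v ≠ D.x i ∧ v ≠ D.y i) ∨ v = D.x i ∨ v = D.y i := by
  tauto

lemma neighborSet_x (hc : IsCubic (D.G i)) :
    (D.G i).neighborSet (D.x i) = {D.y i, D.x0 i, D.x1 i} :=
  neighborSet_eq_of_ncard_eq_three (hc _) (D.adj_xy i) (D.adj_xx0 i) (D.adj_xx1 i)
    (D.x0_ne_y i).symm (D.x1_ne_y i).symm (D.x0_ne_x1 i)

lemma neighborSet_y (hc : IsCubic (D.G i)) :
    (D.G i).neighborSet (D.y i) = {D.x i, D.y0 i, D.y1 i} :=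
  neighborSet_eq_of_ncard_eq_three (hc _) (D.adj_xy i).symm (D.adj_yy0 i) (D.adj_yy1 i)
    (D.y0_ne_x i).symm (D.y1_ne_x i).symm (D.y0_ne_y1 i)

open Classical in
/-- The end at `v` of the edge of the windmill graph that replaces the edge `v — w` of `G i`:
`v` itself if it lies in `H i`, and `a (i - 1)`, `b (i - 1)`, `a (i + 1)`, `b (i + 1)` for the
edges `x — x0`, `x — x1`, `y — y0`, `y — y1`. -/
noncomputable def port (i : Fin 3) (v w : D.V i) : D.Vert :=
  if h : v ≠ D.x i ∧ v ≠ D.y i then D.hv ⟨v, h⟩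
  else if v = D.x i then (if w = D.x0 i then D.av (i - 1) else D.bv (i - 1))
  else if w = D.y0 i then D.av (i + 1) else D.bv (i + 1)

noncomputable def liftEdge (i : Fin 3) (v w : D.V i) : Sym2 D.Vert :=
  s(D.port i v w, D.port i w v)

lemma liftEdge_comm (v w : D.V i) : D.liftEdge i v w = D.liftEdge i w v := Sym2.eq_swap

lemma port_of_ne {v : D.V i} (h : v ≠ D.x i ∧ v ≠ D.y i) (w : D.V i) :
    D.port i v w = D.hv ⟨v, h⟩ := dif_pos h

lemma port_x_x0 : D.port i (D.x i) (D.x0 i) = D.av (i - 1) := by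
  simp [port]

lemma port_x_of_ne {w : D.V i} (hw : w ≠ D.x0 i) : D.port i (D.x i) w = D.bv (i - 1) := by
  simp [port, hw]

lemma port_y_y0 : D.port i (D.y i) (D.y0 i) = D.av (i + 1) := by
  simp [port, (D.adj_xy i).ne']

lemma port_y_of_ne {w : D.V i} (hw : w ≠ D.y0 i) : D.port i (D.y i) w = D.bv (i + 1) := by
  simp [port, (D.adj_xy i).ne', hw]

lemma port_x_mem_Aset (v : D.V i) : D.port i (D.x i) v ∈ D.Aset (i - 1) := by
  by_cases hv : v = D.x0 i
  · rw [hv, port_x_x0]; exact Or.inl rfl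
  · rw [D.port_x_of_ne hv]; exact Or.inr (Or.inl rfl)

lemma port_y_mem_Aset (v : D.V i) : D.port i (D.y i) v ∈ D.Aset (i + 1) := by
  by_cases hv : v = D.y0 i
  · rw [hv, port_y_y0]; exact Or.inl rfl
  · rw [D.port_y_of_ne hv]; exact Or.inr (Or.inl rfl)

lemma port_injective (v : D.V i) : Function.Injective (D.port i · v) := by
  have hH {w : D.V i} (hw : w ≠ D.x i ∧ w ≠ D.y i) (j : Fin 3) : D.port i w v ∉ D.Aset j := by
    rw [D.port_of_ne hw]; exact D.hv_notMem_Aset _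
  have hx := D.port_x_mem_Aset v
  have hy := D.port_y_mem_Aset v
  intro w w' (h : D.port i w v = D.port i w' v)
  obtain hw | rfl | rfl := D.ne_xy_or_eq_x_or_eq_y w <;>
    obtain hw' | rfl | rfl := D.ne_xy_or_eq_x_or_eq_y w'
  · rw [D.port_of_ne hw, D.port_of_ne hw'] at h
    exact congrArg Subtype.val (D.hv_injective h)
  · exact absurd (h ▸ hx) (hH hw _)
  · exact absurd (h ▸ hy) (hH hw _)
  · exact absurd (h ▸ hx) (hH hw' _)
  · rfl
  · exact absurd (D.eq_of_mem_Aset (h ▸ hx) hy) (Fin.sub_one_ne_add_one i)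
  · exact absurd (h ▸ hy) (hH hw' _)
  · exact absurd (D.eq_of_mem_Aset (h ▸ hy) hx) (Fin.sub_one_ne_add_one i).symm
  · rfl

lemma exists_port_eq_of_adj_hv {v : D.HVert i} {q : D.Vert} (h : D.graph.Adj (D.hv v) q) :
    ∃ w, (D.G i).Adj v.1 w ∧ D.port i w v.1 = q := by
  rcases D.adj_hv_cases h with ⟨w, hvw, rfl⟩ | ⟨hv, rfl⟩ | ⟨hv, rfl⟩ | ⟨hv, rfl⟩ | ⟨hv, rfl⟩
  · exact ⟨w.1, hvw, D.port_of_ne w.2 _⟩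
  · exact ⟨D.x i, hv ▸ (D.adj_xx0 i).symm, hv ▸ D.port_x_x0⟩
  · exact ⟨D.x i, hv ▸ (D.adj_xx1 i).symm, D.port_x_of_ne (hv ▸ (D.x0_ne_x1 i).symm)⟩
  · exact ⟨D.y i, hv ▸ (D.adj_yy0 i).symm, hv ▸ D.port_y_y0⟩
  · exact ⟨D.y i, hv ▸ (D.adj_yy1 i).symm, D.port_y_of_ne (hv ▸ (D.y0_ne_y1 i).symm)⟩

lemma liftEdge_x_x0 : D.liftEdge i (D.x i) (D.x0 i) = s(D.av (i - 1), D.x0v i) := by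
  rw [liftEdge, port_x_x0, D.port_of_ne ⟨(D.adj_xx0 i).ne', D.x0_ne_y i⟩]; rfl

lemma liftEdge_x_x1 : D.liftEdge i (D.x i) (D.x1 i) = s(D.bv (i - 1), D.x1v i) := by
  rw [liftEdge, D.port_x_of_ne (D.x0_ne_x1 i).symm,
    D.port_of_ne ⟨(D.adj_xx1 i).ne', D.x1_ne_y i⟩]; rfl

lemma liftEdge_y_y0 : D.liftEdge i (D.y i) (D.y0 i) = s(D.av (i + 1), D.y0v i) := by
  rw [liftEdge, port_y_y0, D.port_of_ne ⟨D.y0_ne_x i, (D.adj_yy0 i).ne'⟩]; rfl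

lemma liftEdge_y_y1 : D.liftEdge i (D.y i) (D.y1 i) = s(D.bv (i + 1), D.y1v i) := by
  rw [liftEdge, D.port_y_of_ne (D.y0_ne_y1 i).symm,
    D.port_of_ne ⟨D.y1_ne_x i, (D.adj_yy1 i).ne'⟩]; rfl

lemma liftEdge_mem_edgeSet (hc : IsCubic (D.G i)) {v w : D.V i} (h : (D.G i).Adj v w)
    (hne : s(v, w) ≠ s(D.x i, D.y i)) : D.liftEdge i v w ∈ D.graph.edgeSet := by
  have hx {w : D.V i} (hw : (D.G i).Adj (D.x i) w) (hwy : w ≠ D.y i) :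
      D.liftEdge i (D.x i) w ∈ D.graph.edgeSet := by
    have hw : w ∈ (D.G i).neighborSet (D.x i) := hw
    rw [D.neighborSet_x hc] at hw
    rcases hw with rfl | rfl | rfl
    · exact absurd rfl hwy
    · rw [liftEdge_x_x0]; exact D.adj_av_x0v i
    · rw [liftEdge_x_x1]; exact D.adj_bv_x1v i
  have hy {w : D.V i} (hw : (D.G i).Adj (D.y i) w) (hwx : w ≠ D.x i) :
      D.liftEdge i (D.y i) w ∈ D.graph.edgeSet := by
    have hw : w ∈ (D.G i).neighborSet (D.y i) := hw
    rw [D.neighborSet_y hc] at hw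
    rcases hw with rfl | rfl | rfl
    · exact absurd rfl hwx
    · rw [liftEdge_y_y0]; exact D.adj_av_y0v i
    · rw [liftEdge_y_y1]; exact D.adj_bv_y1v i
  obtain hv | rfl | rfl := D.ne_xy_or_eq_x_or_eq_y v
  · obtain hw | rfl | rfl := D.ne_xy_or_eq_x_or_eq_y w
    · rw [liftEdge, D.port_of_ne hv, D.port_of_ne hw]; exact D.adj_hv_hv h
    · rw [liftEdge_comm]; exact hx h.symm hv.2
    · rw [liftEdge_comm]; exact hy h.symm hv.1
  · exact hx h (fun hw => hne (hw ▸ rfl))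
  · exact hy h (fun hw => hne (hw ▸ Sym2.eq_swap))

open Classical in
noncomputable def restrict (i : Fin 3) (S : Set (Sym2 D.Vert)) : (D.G i).Subgraph where
  verts := Set.univ
  Adj v w := (D.G i).Adj v w ∧
    if s(v, w) = s(D.x i, D.y i) then D.Type0On S i else D.liftEdge i v w ∈ S
  adj_sub h := h.1
  edge_vert _ := Set.mem_univ _
  symm := ⟨fun _ _ h => ⟨h.1.symm, by rw [Sym2.eq_swap, liftEdge_comm]; exact h.2⟩⟩

variable {D} {S : Set (Sym2 D.Vert)}

lemma notMem_of_type0On (h : D.Type0On S i) :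
    s(D.av (i - 1), D.x0v i) ∉ S ∧ s(D.bv (i - 1), D.x1v i) ∉ S ∧
      s(D.av (i + 1), D.y0v i) ∉ S ∧ s(D.bv (i + 1), D.y1v i) ∉ S := by
  rw [Type0On, edgeBoundary_Hset, edgesBetween_Hset_Aset_sub_one,
    edgesBetween_Hset_Aset_add_one, Set.ncard_eq_zero (Set.toFinite _)] at h
  refine ⟨fun he => ?_, fun he => ?_, fun he => ?_, fun he => ?_⟩ <;>
    exact (Set.eq_empty_iff_forall_notMem.mp h) _ ⟨he, by simp⟩

lemma xor_of_type1On (h : D.Type1On S i) :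
    Xor (s(D.av (i - 1), D.x0v i) ∈ S) (s(D.bv (i - 1), D.x1v i) ∈ S) ∧
      Xor (s(D.av (i + 1), D.y0v i) ∈ S) (s(D.bv (i + 1), D.y1v i) ∈ S) := by
  rw [Type1On, edgesBetween_Hset_Aset_sub_one, edgesBetween_Hset_Aset_add_one] at h
  exact ⟨Set.xor_mem_of_ncard_inter_pair_eq_one (D.edge_av_ne_edge_bv _ _) h.1,
    Set.xor_mem_of_ncard_inter_pair_eq_one (D.edge_av_ne_edge_bv _ _) h.2⟩

lemma restrict_adj_x_y : (D.restrict i S).Adj (D.x i) (D.y i) ↔ D.Type0On S i := by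
  simp only [restrict, if_true, and_iff_right (D.adj_xy i)]

lemma restrict_adj_iff_of_ne_xy {v w : D.V i} (hne : s(v, w) ≠ s(D.x i, D.y i)) :
    (D.restrict i S).Adj v w ↔ (D.G i).Adj v w ∧ D.liftEdge i v w ∈ S := by
  simp only [restrict, if_neg hne]

lemma restrict_adj_of_ne {v w : D.V i} (hv : v ≠ D.x i ∧ v ≠ D.y i) :
    (D.restrict i S).Adj v w ↔ (D.G i).Adj v w ∧ s(D.hv ⟨v, hv⟩, D.port i w v) ∈ S := by
  have hne : s(v, w) ≠ s(D.x i, D.y i) := fun h => by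
    rcases Sym2.eq_iff.mp h with ⟨h, -⟩ | ⟨h, -⟩
    exacts [hv.1 h, hv.2 h]
  rw [restrict_adj_iff_of_ne_xy hne, liftEdge, D.port_of_ne hv]

lemma restrict_adj_x_iff (hc : IsCubic (D.G i)) {w : D.V i} :
    (D.restrict i S).Adj (D.x i) w ↔
      w = D.y i ∧ D.Type0On S i ∨ w = D.x0 i ∧ s(D.av (i - 1), D.x0v i) ∈ S ∨
        w = D.x1 i ∧ s(D.bv (i - 1), D.x1v i) ∈ S := by
  have hx0 : s(D.x i, D.x0 i) ≠ s(D.x i, D.y i) := (D.x0_ne_y i) ∘ Sym2.congr_right.mp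
  have hx1 : s(D.x i, D.x1 i) ≠ s(D.x i, D.y i) := (D.x1_ne_y i) ∘ Sym2.congr_right.mp
  constructor
  · intro h
    have hw : w ∈ (D.G i).neighborSet (D.x i) := h.adj_sub
    rw [D.neighborSet_x hc] at hw
    rcases hw with rfl | rfl | rfl
    · exact Or.inl ⟨rfl, restrict_adj_x_y.mp h⟩
    · rw [restrict_adj_iff_of_ne_xy hx0, liftEdge_x_x0] at h
      exact Or.inr (Or.inl ⟨rfl, h.2⟩)
    · rw [restrict_adj_iff_of_ne_xy hx1, liftEdge_x_x1] at h
      exact Or.inr (Or.inr ⟨rfl, h.2⟩)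
  · rintro (⟨rfl, h⟩ | ⟨rfl, h⟩ | ⟨rfl, h⟩)
    · exact restrict_adj_x_y.mpr h
    · rw [restrict_adj_iff_of_ne_xy hx0, liftEdge_x_x0]
      exact ⟨D.adj_xx0 i, h⟩
    · rw [restrict_adj_iff_of_ne_xy hx1, liftEdge_x_x1]
      exact ⟨D.adj_xx1 i, h⟩

lemma restrict_adj_y_iff (hc : IsCubic (D.G i)) {w : D.V i} :
    (D.restrict i S).Adj (D.y i) w ↔
      w = D.x i ∧ D.Type0On S i ∨ w = D.y0 i ∧ s(D.av (i + 1), D.y0v i) ∈ S ∨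
        w = D.y1 i ∧ s(D.bv (i + 1), D.y1v i) ∈ S := by
  have hy0 : s(D.y i, D.y0 i) ≠ s(D.x i, D.y i) :=
    (D.y0_ne_x i) ∘ Sym2.congr_right.mp ∘ (·.trans Sym2.eq_swap)
  have hy1 : s(D.y i, D.y1 i) ≠ s(D.x i, D.y i) :=
    (D.y1_ne_x i) ∘ Sym2.congr_right.mp ∘ (·.trans Sym2.eq_swap)
  constructor
  · intro h
    have hw : w ∈ (D.G i).neighborSet (D.y i) := h.adj_sub
    rw [D.neighborSet_y hc] at hw
    rcases hw with rfl | rfl | rfl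
    · exact Or.inl ⟨rfl, restrict_adj_x_y.mp h.symm⟩
    · rw [restrict_adj_iff_of_ne_xy hy0, liftEdge_y_y0] at h
      exact Or.inr (Or.inl ⟨rfl, h.2⟩)
    · rw [restrict_adj_iff_of_ne_xy hy1, liftEdge_y_y1] at h
      exact Or.inr (Or.inr ⟨rfl, h.2⟩)
  · rintro (⟨rfl, h⟩ | ⟨rfl, h⟩ | ⟨rfl, h⟩)
    · exact (restrict_adj_x_y.mpr h).symm
    · rw [restrict_adj_iff_of_ne_xy hy0, liftEdge_y_y0]
      exact ⟨D.adj_yy0 i, h⟩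
    · rw [restrict_adj_iff_of_ne_xy hy1, liftEdge_y_y1]
      exact ⟨D.adj_yy1 i, h⟩

theorem isPerfectMatching_restrict (hc : IsCubic (D.G i)) {M : D.graph.Subgraph}
    (hM : M.IsPerfectMatching) (ht : D.Type0On M.edgeSet i ∨ D.Type1On M.edgeSet i) :
    (D.restrict i M.edgeSet).IsPerfectMatching := by
  rw [Subgraph.isPerfectMatching_iff]
  intro v
  have h0 (h : D.Type0On M.edgeSet i) := notMem_of_type0On h
  have h1 (h : ¬D.Type0On M.edgeSet i) := xor_of_type1On (ht.resolve_left h)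
  obtain hv | rfl | rfl := D.ne_xy_or_eq_x_or_eq_y v
  · obtain ⟨q, hq, hq_unique⟩ := Subgraph.isPerfectMatching_iff.mp hM (D.hv ⟨v, hv⟩)
    obtain ⟨w, hvw, rfl⟩ := D.exists_port_eq_of_adj_hv (M.adj_sub hq)
    refine ⟨w, (restrict_adj_of_ne hv).mpr ⟨hvw, hq⟩, fun w' hw' => D.port_injective v ?_⟩
    exact hq_unique _ ((restrict_adj_of_ne hv).mp hw').2
  · simp_rw [restrict_adj_x_iff hc]
    exact existsUnique_of_imp_of_xor (fun h => ⟨(h0 h).1, (h0 h).2.1⟩) (fun h => (h1 h).1)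
  · simp_rw [restrict_adj_y_iff hc]
    exact existsUnique_of_imp_of_xor (fun h => (h0 h).2.2) (fun h => (h1 h).2)

theorem exists_restrict_adj (hc : IsCubic (D.G i)) {k : ℕ} {M : Fin k → D.graph.Subgraph}
    (hcov : ⋃ t, (M t).edgeSet = D.graph.edgeSet) (h0 : ∃ t, D.Type0On (M t).edgeSet i)
    {v w : D.V i} (h : (D.G i).Adj v w) : ∃ t, (D.restrict i (M t).edgeSet).Adj v w := by
  by_cases hxy : s(v, w) = s(D.x i, D.y i)
  · obtain ⟨t, ht⟩ := h0
    exact ⟨t, h, by rwa [if_pos hxy]⟩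
  · obtain ⟨t, ht⟩ := Set.mem_iUnion.mp (hcov ▸ D.liftEdge_mem_edgeSet hc h hxy)
    exact ⟨t, h, by rwa [if_neg hxy]⟩

end WindmillData

theorem windmill_cover_restrict_general (D : WindmillData)
    (hc : ∀ i, IsCubic (D.G i))
    (i : Fin 3) (k : ℕ) (M : Fin k → D.graph.Subgraph)
    (hpm : ∀ t, (M t).IsPerfectMatching)
    (hcov : (⋃ t, (M t).edgeSet) = D.graph.edgeSet)
    (htype : ∀ t, D.Type0On (M t).edgeSet i ∨ D.Type1On (M t).edgeSet i)
    (h0 : ∃ t, D.Type0On (M t).edgeSet i) :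
    CoverByPM (D.G i) k := by
  refine ⟨fun t => D.restrict i (M t).edgeSet,
    fun t => D.isPerfectMatching_restrict (hc i) (hpm t) (htype t), ?_⟩
  refine subset_antisymm (Set.iUnion_subset fun t => Subgraph.edgeSet_subset _) fun e he => ?_
  induction e using Sym2.ind with
  | _ v w =>
    obtain ⟨t, ht⟩ := D.exists_restrict_adj (hc i) hcov h0 he
    exact Set.mem_iUnion.mpr ⟨t, ht⟩

/-- If the windmill graph `G` of cubic bridgeless graphs
`G 0, G 1, G 2` is covered by `k` perfect matchings, each of type 0 or type 1
on `H i` and at least one of type 0 on `H i`, then `G i` can be covered by `k`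
perfect matchings. -/
theorem windmill_cover_restrict (D : WindmillData) (hfin : ∀ i, Finite (D.V i))
    (hc : ∀ i, IsCubic (D.G i)) (hb : ∀ i, IsBridgeless (D.G i))
    (i : Fin 3) (k : ℕ) (M : Fin k → D.graph.Subgraph)
    (hpm : ∀ t, (M t).IsPerfectMatching)
    (hcov : (⋃ t, (M t).edgeSet) = D.graph.edgeSet)
    (htype : ∀ t, D.Type0On (M t).edgeSet i ∨ D.Type1On (M t).edgeSet i)
    (h0 : ∃ t, D.Type0On (M t).edgeSet i) :
    CoverByPM (D.G i) k :=
  windmill_cover_restrict_general D hc i k M hpm hcov htype h0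
end

section
/- If G_0, G_1, G_2 are cubic bridgeless graphs each admitting a Berge-Fulkerson cover, then any graph G obtained from G_0, G_1, G_2 by the windmill construction admits a Berge-Fulkerson cover. -/
open SimpleGraph

/-- A Berge–Fulkerson cover: six perfect matchings such that every edge belongs
to precisely two of them. -/
def HasBFCover {V : Type*} (G : SimpleGraph V) : Prop :=
  ∃ M : Fin 6 → G.Subgraph, (∀ i, (M i).IsPerfectMatching) ∧
    ∀ e ∈ G.edgeSet, ({i : Fin 6 | e ∈ (M i).edgeSet}).ncard = 2

/-!
A perfect matching is encoded by its partner involution, so a Berge–Fulkerson cover is a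
family of six involutions in which every edge `v w` is realised (`f t v = w`) by exactly two.

Fix such covers of the `G i`. In `G i` two matchings contain `x i y i`; each of the other four
matches `x i` to one of `x i ^ 0`, `x i ^ 1` and `y i` to one of `y i ^ 0`, `y i ^ 1`, each
choice occurring twice. Hall's theorem lets us reindex them by slots `(j, r) : Fin 3 × Fin 2`
so that in slot `(j, r)` the graph `G j` uses `x j y j`, `G (j + 1)` matches `x` to `x ^ r`
and `G (j - 1)` matches `y` to `y ^ (1 - r)`. Cutting every matching at `x i`, `y i` and routing
its port edges to the new vertices gives a perfect matching of the windmill in each slot: `c j`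
takes `u`, while `a j` and `b j` take the ports of `H (j + 1)` and `H (j - 1)`; for `k ≠ j`
exactly one of `H (k ± 1)` is closed, so exactly one of `a k`, `b k` takes a port and the other
takes `c k`. Edges inside `H i` and port edges inherit their two slots from `G i`, `c k u` lies
in the two slots with `j = k`, and `c k a k`, `c k b k` get the remaining `6 - 2 - 2` slots.
-/

theorem Set.ncard_setOf_apply_eq_comm {ι α : Type*} {f : ι → α → α}
    (hf : ∀ t, Function.Involutive (f t)) (a b : α) :
    {t | f t a = b}.ncard = {t | f t b = a}.ncard := by
  congr 1; ext t
  exact ⟨fun h => h ▸ hf t a, fun h => h ▸ hf t b⟩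

theorem Set.ncard_setOf_fst_eq {α β : Type*} (a : α) :
    {s : α × β | s.1 = a}.ncard = Nat.card β := by
  rw [← Set.ncard_range_of_injective (Prod.mk_right_injective a)]
  congr 1; ext ⟨a', b⟩; simp [eq_comm]

open Finset in
theorem Finset.exists_injective_of_union_eq {α : Type*} [DecidableEq α]
    (X Y : Fin 2 → Finset α) (hX : ∀ r, #(X r) = 2) (hY : ∀ r, #(Y r) = 2)
    (hXd : Disjoint (X 0) (X 1))
    (hXY : X 0 ∪ X 1 = Y 0 ∪ Y 1) :
    ∃ g : Fin 2 ⊕ Fin 2 → α, g.Injective ∧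
      ∀ r, g (.inl r) ∈ X r ∧ g (.inr r) ∈ Y r := by
  have hall (S : Finset (Fin 2 ⊕ Fin 2)) : #S ≤ #(S.biUnion (Sum.elim X Y)) := by
    by_cases hS : #S ≤ 2
    · obtain rfl | ⟨i, hi⟩ := S.eq_empty_or_nonempty
      · simp
      calc #S ≤ #(Sum.elim X Y i) := by cases i <;> simp [hX, hY, hS]
        _ ≤ #(S.biUnion (Sum.elim X Y)) := card_le_card (subset_biUnion_of_mem _ hi)
    have hpair : ∀ S : Finset (Fin 2 ⊕ Fin 2), 3 ≤ #S →
        (.inl 0 ∈ S ∧ .inl 1 ∈ S) ∨ (.inr 0 ∈ S ∧ .inr 1 ∈ S) := by decide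
    have hsub : X 0 ∪ X 1 ⊆ S.biUnion (Sum.elim X Y) := by
      rcases hpair S (by omega) with ⟨h0, h1⟩ | ⟨h0, h1⟩
      · exact union_subset (subset_biUnion_of_mem (Sum.elim X Y) h0)
          (subset_biUnion_of_mem (Sum.elim X Y) h1)
      · exact hXY ▸ union_subset (subset_biUnion_of_mem (Sum.elim X Y) h0)
          (subset_biUnion_of_mem (Sum.elim X Y) h1)
    calc #S ≤ 4 := by simpa using S.card_le_univ
      _ = #(X 0 ∪ X 1) := by rw [card_union_of_disjoint hXd, hX, hX]
      _ ≤ _ := card_le_card hsub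
  obtain ⟨g, hg, hmem⟩ := (all_card_le_biUnion_card_iff_exists_injective _).1 hall
  exact ⟨g, hg, fun r => ⟨hmem (.inl r), hmem (.inr r)⟩⟩

theorem Fin.eq_or_eq_add_one_or_eq_sub_one (j k : Fin 3) : j = k ∨ j = k + 1 ∨ j = k - 1 := by
  revert j k; decide

theorem Fin.add_one_ne_sub_one (k : Fin 3) : k + 1 ≠ k - 1 := by
  revert k; decide

theorem Fin.ne_iff_eq_rev {r r' : Fin 2} : r ≠ r' ↔ r = r'.rev := by
  revert r r'; decide

theorem IsCubic.eq_or_eq_or_eq_of_adj {V : Type*} {G : SimpleGraph V} (hG : IsCubic G)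
    {v a b c w : V} (ha : G.Adj v a) (hb : G.Adj v b) (hc : G.Adj v c) (hab : a ≠ b)
    (hac : a ≠ c) (hbc : b ≠ c) (hw : G.Adj v w) : w = a ∨ w = b ∨ w = c := by
  have hN : ({a, b, c} : Set V) = G.neighborSet v :=
    Set.eq_of_subset_of_ncard_le (by simp [Set.insert_subset_iff, ha, hb, hc])
      (by rw [hG v, Set.ncard_eq_three.2 ⟨a, b, c, hab, hac, hbc, rfl⟩])
      (Set.finite_of_ncard_ne_zero (by rw [hG v]; decide))
  simpa [← hN] using (G.mem_neighborSet v w).2 hw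

namespace SimpleGraph

variable {V ι : Type*} {G : SimpleGraph V}

/-- `f t v` is the partner of `v` in the `t`-th perfect matching of the cover. -/
structure IsPartnerCover (G : SimpleGraph V) (f : ι → V → V) : Prop where
  involutive : ∀ t, Function.Involutive (f t)
  adj : ∀ t v, G.Adj v (f t v)
  ncard_eq_two : ∀ ⦃v w⦄, G.Adj v w → {t | f t v = w}.ncard = 2

def partnerMatching (f : V → V) (hf : Function.Involutive f) (hadj : ∀ v, G.Adj v (f v)) :
    G.Subgraph where
  verts := Set.univ
  Adj v w := f v = w
  adj_sub := by rintro v _ rfl; exact hadj v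
  edge_vert _ := Set.mem_univ _
  symm := ⟨fun v w h => by rw [← h, hf v]⟩

theorem partnerMatching_isPerfectMatching (f : V → V) (hf : Function.Involutive f)
    (hadj : ∀ v, G.Adj v (f v)) : (partnerMatching f hf hadj).IsPerfectMatching :=
  Subgraph.isPerfectMatching_iff.2 fun v => ⟨f v, show f v = f v from rfl, fun _ h => Eq.symm h⟩

theorem IsPartnerCover.comp_bijective {κ : Type*} {f : ι → V → V} (hf : G.IsPartnerCover f)
    {σ : κ → ι} (hσ : σ.Bijective) : G.IsPartnerCover (fun s => f (σ s)) where
  involutive s := hf.involutive (σ s)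
  adj s := hf.adj (σ s)
  ncard_eq_two v w h := by
    rw [← hf.ncard_eq_two h]
    exact Set.ncard_preimage_of_injective_subset_range (s := {t | f t v = w}) hσ.1
      (by simp [hσ.2.range_eq])

theorem hasBFCover_iff_exists_isPartnerCover :
    HasBFCover G ↔ ∃ f : Fin 6 → V → V, G.IsPartnerCover f := by
  constructor
  · rintro ⟨M, hM, hcount⟩
    have hex t v := Subgraph.isPerfectMatching_iff.1 (hM t) v
    choose f hfM hfu using hex
    have hpartner : ∀ t v w, (M t).Adj v w ↔ f t v = w :=
      fun t v w => ⟨fun h => (hfu t v w h).symm, fun h => h ▸ hfM t v⟩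
    refine ⟨f, fun t v => (hpartner t _ v).1 (hfM t v).symm, fun t v => (hfM t v).adj_sub,
      fun v w h => ?_⟩
    simpa only [Subgraph.mem_edgeSet, hpartner] using hcount s(v, w) h
  · rintro ⟨f, hf⟩
    refine ⟨fun t => partnerMatching (f t) (hf.involutive t) (hf.adj t),
      fun t => partnerMatching_isPerfectMatching _ _ _, fun e he => ?_⟩
    induction e using Sym2.ind with
    | _ v w => exact hf.ncard_eq_two (G.mem_edgeSet.1 he)

open Finset in
theorem IsPartnerCover.exists_injective_roles [Fintype ι] {f : ι → V → V}
    (hf : G.IsPartnerCover f) {x y : V} {xn yn : Fin 2 → V} (hxy : G.Adj x y)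
    (hxn : ∀ r, G.Adj x (xn r)) (hyn : ∀ r, G.Adj y (yn r)) (hxn01 : xn 0 ≠ xn 1)
    (hxn_ne : ∀ r, xn r ≠ y) (hyn_ne : ∀ r, yn r ≠ x)
    (hx : ∀ t, f t x = y ∨ ∃ r, f t x = xn r)
    (hy : ∀ t, f t y = x ∨ ∃ r, f t y = yn r) :
    ∃ e : Fin 2 ⊕ Fin 2 ⊕ Fin 2 → ι, e.Injective ∧
      ∀ r, f (e (.inl r)) x = y ∧ f (e (.inr (.inl r))) x = xn r ∧
        f (e (.inr (.inr r))) y = yn r := by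
  classical
  have hcard {v w : V} (h : G.Adj v w) : #{t | f t v = w} = 2 := by
    rw [← hf.ncard_eq_two h, Set.ncard_eq_toFinset_card']; simp
  obtain ⟨c0, c1, hc01, hC⟩ := Finset.card_eq_two.1 (hcard hxy)
  have hclosed {t : ι} (ht : f t x = y) : f t y = x := ht ▸ hf.involutive t x
  have hopen (t : ι) : (∃ r, f t x = xn r) ↔ ∃ r, f t y = yn r := by
    constructor
    · rintro ⟨r, hr⟩
      refine (hy t).resolve_left fun h => hxn_ne r ?_
      rw [← hr, ← h, hf.involutive t y]
    · rintro ⟨r, hr⟩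
      refine (hx t).resolve_left fun h => hyn_ne r ?_
      rw [← hr, hclosed h]
  obtain ⟨g, hg, hgmem⟩ := Finset.exists_injective_of_union_eq
    (fun r => {t | f t x = xn r}) (fun r => {t | f t y = yn r})
    (fun r => hcard (hxn r)) (fun r => hcard (hyn r))
    (Finset.disjoint_filter.2 fun t _ h h' => hxn01 (h.symm.trans h'))
    (by ext t; simpa [Fin.exists_fin_two] using hopen t)
  simp only [Finset.mem_filter, Finset.mem_univ, true_and] at hgmem
  have hc : ∀ r, f (![c0, c1] r) x = y := by
    have hmem : ∀ t ∈ ({c0, c1} : Finset ι), f t x = y := fun t ht => by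
      simpa using (hC.symm ▸ ht : t ∈ ({t | f t x = y} : Finset ι))
    simp only [Fin.forall_fin_two]
    exact ⟨hmem _ (by simp), hmem _ (by simp)⟩
  refine ⟨Sum.elim ![c0, c1] g, ?_, fun r => ⟨hc r, (hgmem r).1, (hgmem r).2⟩⟩
  have hc_inj : (![c0, c1]).Injective := by
    simp [Function.Injective, Fin.forall_fin_two, hc01, hc01.symm]
  refine hc_inj.sumElim hg ?_
  rintro r (r' | r') h
  · exact hxn_ne r' (by rw [← (hgmem r').1, ← h, hc r])
  · exact hyn_ne r' (by rw [← (hgmem r').2, ← h, hclosed (hc r)])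

end SimpleGraph

namespace WindmillData

variable (D : WindmillData)

def xn (i : Fin 3) : Fin 2 → D.V i := ![D.x0 i, D.x1 i]

def yn (i : Fin 3) : Fin 2 → D.V i := ![D.y0 i, D.y1 i]

variable {D}

theorem adj_x_xn (i : Fin 3) : ∀ r, (D.G i).Adj (D.x i) (D.xn i r)
  | 0 => D.adj_xx0 i
  | 1 => D.adj_xx1 i

theorem adj_y_yn (i : Fin 3) : ∀ r, (D.G i).Adj (D.y i) (D.yn i r)
  | 0 => D.adj_yy0 i
  | 1 => D.adj_yy1 i

theorem xn_ne_y (i : Fin 3) : ∀ r, D.xn i r ≠ D.y i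
  | 0 => D.x0_ne_y i
  | 1 => D.x1_ne_y i

theorem yn_ne_x (i : Fin 3) : ∀ r, D.yn i r ≠ D.x i
  | 0 => D.y0_ne_x i
  | 1 => D.y1_ne_x i

theorem xn_injective (i : Fin 3) : (D.xn i).Injective := by
  simp [Function.Injective, Fin.forall_fin_two, xn, D.x0_ne_x1 i, (D.x0_ne_x1 i).symm]

theorem yn_injective (i : Fin 3) : (D.yn i).Injective := by
  simp [Function.Injective, Fin.forall_fin_two, yn, D.y0_ne_y1 i, (D.y0_ne_y1 i).symm]

variable (D)

def toHVert {i : Fin 3} (v : D.V i) (hx : v ≠ D.x i) (hy : v ≠ D.y i) : D.HVert i :=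
  ⟨v, hx, hy⟩

def hval {i : Fin 3} (v : D.HVert i) : D.V i := v.1

def xport (i : Fin 3) (r : Fin 2) : D.Vert :=
  D.hv (D.toHVert (D.xn i r) (D.adj_x_xn i r).ne' (D.xn_ne_y i r))

def yport (i : Fin 3) (r : Fin 2) : D.Vert :=
  D.hv (D.toHVert (D.yn i r) (D.yn_ne_x i r) (D.adj_y_yn i r).ne')

/-- `pv k 0 = a k` and `pv k 1 = b k`. -/
def pv (k : Fin 3) (r : Fin 2) : D.Vert := Sum.inr (Sum.inl (k, r.castSucc))

variable {D}

@[simp] theorem hval_toHVert {i : Fin 3} {v : D.V i} (hx : v ≠ D.x i) (hy : v ≠ D.y i) :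
    D.hval (D.toHVert v hx hy) = v :=
  rfl

theorem toHVert_eq_iff {i : Fin 3} {a : D.V i} {hx : a ≠ D.x i} {hy : a ≠ D.y i}
    {v : D.HVert i} : D.toHVert a hx hy = v ↔ a = D.hval v :=
  ⟨fun h => h ▸ rfl, fun h => Subtype.ext h⟩

theorem hval_ne_x {i : Fin 3} (v : D.HVert i) : D.hval v ≠ D.x i := v.2.1

theorem hval_ne_y {i : Fin 3} (v : D.HVert i) : D.hval v ≠ D.y i := v.2.2

@[simp] theorem hv_inj {i : Fin 3} {v w : D.HVert i} : D.hv v = D.hv w ↔ v = w := by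
  unfold hv Vert; simp

theorem hv_ne_hv {i i' : Fin 3} (h : i ≠ i') (v : D.HVert i) (w : D.HVert i') :
    D.hv v ≠ D.hv w := by
  unfold hv Vert; simp [h]

@[simp] theorem hv_ne_pv {i : Fin 3} (v : D.HVert i) (k : Fin 3) (r : Fin 2) :
    D.hv v ≠ D.pv k r := Sum.inl_ne_inr

@[simp] theorem hv_ne_cv {i : Fin 3} (v : D.HVert i) (k : Fin 3) : D.hv v ≠ D.cv k :=
  Sum.inl_ne_inr

@[simp] theorem pv_inj {k k' : Fin 3} {r r' : Fin 2} :
    D.pv k r = D.pv k' r' ↔ k = k' ∧ r = r' := by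
  unfold pv Vert; simp

@[simp] theorem pv_ne_cv (k k' : Fin 3) (r : Fin 2) : D.pv k r ≠ D.cv k' := by
  unfold pv cv Vert
  simpa using fun _ => (Fin.castSucc_lt_last r).ne

@[simp] theorem cv_ne_uv (k : Fin 3) : D.cv k ≠ D.uv := by
  unfold cv uv Vert; simp

theorem xport_ne_yport (k : Fin 3) (r r' : Fin 2) : D.xport (k + 1) r ≠ D.yport (k - 1) r' :=
  hv_ne_hv (Fin.add_one_ne_sub_one k) _ _

theorem adj_of_rel {p q : D.Vert} (hne : p ≠ q) (h : D.rel p q) : D.graph.Adj p q :=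
  (fromRel_adj D.rel p q).2 ⟨hne, Or.inl h⟩

theorem adj_hv {i : Fin 3} {v w : D.HVert i} (h : (D.G i).Adj v.1 w.1) :
    D.graph.Adj (D.hv v) (D.hv w) :=
  adj_of_rel (by rw [ne_eq, hv_inj]; exact fun e => h.ne (congrArg Subtype.val e))
    (Or.inl ⟨i, v, w, h, rfl, rfl⟩)

theorem adj_pv_xport (k : Fin 3) : ∀ r, D.graph.Adj (D.pv k r) (D.xport (k + 1) r)
  | 0 => adj_of_rel (hv_ne_pv _ _ _).symm (Or.inr (Or.inl ⟨k, rfl, rfl⟩))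
  | 1 => adj_of_rel (hv_ne_pv _ _ _).symm (Or.inr (Or.inr (Or.inr (Or.inl ⟨k, rfl, rfl⟩))))

theorem adj_pv_yport (k : Fin 3) : ∀ r, D.graph.Adj (D.pv k r) (D.yport (k - 1) r)
  | 0 => adj_of_rel (hv_ne_pv _ _ _).symm (Or.inr (Or.inr (Or.inl ⟨k, rfl, rfl⟩)))
  | 1 => adj_of_rel (hv_ne_pv _ _ _).symm
      (Or.inr (Or.inr (Or.inr (Or.inr (Or.inl ⟨k, rfl, rfl⟩)))))

theorem adj_cv_pv (k : Fin 3) : ∀ r, D.graph.Adj (D.cv k) (D.pv k r)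
  | 0 => adj_of_rel (pv_ne_cv _ _ _).symm
      (Or.inr (Or.inr (Or.inr (Or.inr (Or.inr ⟨k, rfl, Or.inl rfl⟩)))))
  | 1 => adj_of_rel (pv_ne_cv _ _ _).symm
      (Or.inr (Or.inr (Or.inr (Or.inr (Or.inr ⟨k, rfl, Or.inr (Or.inl rfl)⟩)))))

theorem adj_cv_uv (k : Fin 3) : D.graph.Adj (D.cv k) D.uv :=
  adj_of_rel (cv_ne_uv k)
    (Or.inr (Or.inr (Or.inr (Or.inr (Or.inr ⟨k, rfl, Or.inr (Or.inr rfl)⟩)))))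

theorem forall_vert {P : D.Vert → Prop} :
    (∀ p, P p) ↔ (∀ i (v : D.HVert i), P (D.hv v)) ∧ (∀ k r, P (D.pv k r)) ∧
      (∀ k, P (D.cv k)) ∧ P D.uv := by
  refine ⟨fun h => ⟨fun _ _ => h _, fun _ _ => h _, fun _ => h _, h _⟩, ?_⟩
  rintro ⟨hH, hP, hC, hU⟩ (⟨i, v⟩ | ⟨k, t⟩ | ⟨⟩)
  · exact hH i v
  · induction t using Fin.lastCases with
    | last => exact hC k
    | cast r => exact hP k r
  · exact hU

@[simp] theorem cv_inj {k k' : Fin 3} : D.cv k = D.cv k' ↔ k = k' := by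
  unfold cv Vert; simp

/-- Perfect-matching partners on each `G i`, indexed by the slots `(j, r)` of the windmill
matchings: in slot `(j, r)`, `G j` uses `x j y j`, `G (j + 1)` matches `x` to `xn r` and
`G (j - 1)` matches `y` to `yn r.rev`. -/
structure SlotCover (D : WindmillData) where
  m : ∀ i, Fin 3 × Fin 2 → D.V i → D.V i
  isPartnerCover : ∀ i, (D.G i).IsPartnerCover (m i)
  x_cases : ∀ i s, m i s (D.x i) = D.y i ∨ ∃ r, m i s (D.x i) = D.xn i r
  y_cases : ∀ i s, m i s (D.y i) = D.x i ∨ ∃ r, m i s (D.y i) = D.yn i r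
  closed : ∀ i r, m i (i, r) (D.x i) = D.y i
  x_open : ∀ i r, m i (i - 1, r) (D.x i) = D.xn i r
  y_open : ∀ i r, m i (i + 1, r) (D.y i) = D.yn i r.rev

namespace SlotCover

variable (S : D.SlotCover)

theorem m_m (i : Fin 3) (s : Fin 3 × Fin 2) (v : D.V i) : S.m i s (S.m i s v) = v :=
  (S.isPartnerCover i).involutive s v

theorem m_eq_comm {i : Fin 3} {s : Fin 3 × Fin 2} {v w : D.V i} :
    S.m i s v = w ↔ S.m i s w = v :=
  ⟨fun h => h ▸ S.m_m i s v, fun h => h ▸ S.m_m i s w⟩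

theorem m_x_eq_y_iff {i : Fin 3} {s : Fin 3 × Fin 2} : S.m i s (D.x i) = D.y i ↔ s.1 = i := by
  obtain ⟨j, r⟩ := s
  refine ⟨fun h => ?_, fun h => h ▸ S.closed i r⟩
  obtain rfl | rfl | rfl := Fin.eq_or_eq_add_one_or_eq_sub_one j i
  · rfl
  · exact absurd (S.m_eq_comm.1 h) (S.y_open i r ▸ D.yn_ne_x i r.rev)
  · exact absurd h (S.x_open i r ▸ D.xn_ne_y i r)

/-- The vertex `pv k r` is matched, in slot `s`, to the port `xn r` of `H (k + 1)`. -/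
def XLinked (s : Fin 3 × Fin 2) (k : Fin 3) (r : Fin 2) : Prop :=
  S.m (k + 1) s (D.x (k + 1)) = D.xn (k + 1) r

/-- The vertex `pv k r` is matched, in slot `s`, to the port `yn r` of `H (k - 1)`. -/
def YLinked (s : Fin 3 × Fin 2) (k : Fin 3) (r : Fin 2) : Prop :=
  S.m (k - 1) s (D.y (k - 1)) = D.yn (k - 1) r

def Unlinked (s : Fin 3 × Fin 2) (k : Fin 3) (r : Fin 2) : Prop :=
  ¬ S.XLinked s k r ∧ ¬ S.YLinked s k r

theorem xLinked_iff_of_fst_eq {s : Fin 3 × Fin 2} {k : Fin 3} (h : s.1 = k) (r : Fin 2) :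
    S.XLinked s k r ↔ r = s.2 := by
  obtain ⟨j, r'⟩ := s
  subst h
  have := S.x_open (j + 1) r'
  rw [add_sub_cancel_right] at this
  rw [XLinked, this, (D.xn_injective _).eq_iff, eq_comm]

theorem yLinked_iff_of_fst_eq {s : Fin 3 × Fin 2} {k : Fin 3} (h : s.1 = k) (r : Fin 2) :
    S.YLinked s k r ↔ r = s.2.rev := by
  obtain ⟨j, r'⟩ := s
  subst h
  have := S.y_open (j - 1) r'
  rw [sub_add_cancel] at this
  rw [YLinked, this, (D.yn_injective _).eq_iff, eq_comm]

theorem exists_xLinked_iff {s : Fin 3 × Fin 2} {k : Fin 3} :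
    (∃ r, S.XLinked s k r) ↔ s.1 ≠ k + 1 := by
  rw [ne_eq, ← S.m_x_eq_y_iff]
  exact ⟨fun ⟨r, hr⟩ h => D.xn_ne_y _ r (hr ▸ h), (S.x_cases _ s).resolve_left⟩

theorem exists_yLinked_iff {s : Fin 3 × Fin 2} {k : Fin 3} :
    (∃ r, S.YLinked s k r) ↔ s.1 ≠ k - 1 := by
  rw [ne_eq, ← S.m_x_eq_y_iff, S.m_eq_comm]
  exact ⟨fun ⟨r, hr⟩ h => D.yn_ne_x _ r (hr ▸ h), (S.y_cases _ s).resolve_left⟩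

theorem xLinked_unique {s : Fin 3 × Fin 2} {k : Fin 3} {r r' : Fin 2} (h : S.XLinked s k r)
    (h' : S.XLinked s k r') : r = r' :=
  D.xn_injective _ (h.symm.trans h')

theorem yLinked_unique {s : Fin 3 × Fin 2} {k : Fin 3} {r r' : Fin 2} (h : S.YLinked s k r)
    (h' : S.YLinked s k r') : r = r' :=
  D.yn_injective _ (h.symm.trans h')

theorem not_xLinked_and_yLinked (s : Fin 3 × Fin 2) (k : Fin 3) (r : Fin 2) :
    ¬ (S.XLinked s k r ∧ S.YLinked s k r) := by
  rintro ⟨hx, hy⟩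
  obtain h | h | h := Fin.eq_or_eq_add_one_or_eq_sub_one s.1 k
  · rw [S.xLinked_iff_of_fst_eq h] at hx
    rw [S.yLinked_iff_of_fst_eq h, hx] at hy
    exact Fin.ne_iff_eq_rev.2 hy rfl
  · exact S.exists_xLinked_iff.1 ⟨r, hx⟩ h
  · exact S.exists_yLinked_iff.1 ⟨r, hy⟩ h

/-- Away from slot `s.1`, one side of the gadget `k` is closed and the other side links
exactly one of `pv k 0`, `pv k 1`; in slot `s.1` itself both are linked. -/
theorem exists_unlinked_iff (s : Fin 3 × Fin 2) (k : Fin 3) :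
    (∃ r, S.Unlinked s k r) ↔ s.1 ≠ k := by
  constructor
  · rintro ⟨r, hx, hy⟩ h
    rcases eq_or_ne r s.2 with hr | hr
    · exact hx ((S.xLinked_iff_of_fst_eq h r).2 hr)
    · exact hy ((S.yLinked_iff_of_fst_eq h r).2 (Fin.ne_iff_eq_rev.1 hr))
  · intro hk
    obtain h | h := (Fin.eq_or_eq_add_one_or_eq_sub_one s.1 k).resolve_left hk
    · obtain ⟨r, hr⟩ := S.exists_yLinked_iff.2 (h ▸ Fin.add_one_ne_sub_one k)
      refine ⟨r.rev, fun hx => S.exists_xLinked_iff.1 ⟨_, hx⟩ h, fun hy => ?_⟩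
      exact Fin.ne_iff_eq_rev.2 rfl (S.yLinked_unique hy hr)
    · obtain ⟨r, hr⟩ := S.exists_xLinked_iff.2 (h ▸ (Fin.add_one_ne_sub_one k).symm)
      refine ⟨r.rev, fun hx => ?_, fun hy => S.exists_yLinked_iff.1 ⟨_, hy⟩ h⟩
      exact Fin.ne_iff_eq_rev.2 rfl (S.xLinked_unique hx hr)

theorem unlinked_unique {s : Fin 3 × Fin 2} {k : Fin 3} {r r' : Fin 2} (h : S.Unlinked s k r)
    (h' : S.Unlinked s k r') : r = r' := by
  have hk := (S.exists_unlinked_iff s k).1 ⟨r, h⟩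
  obtain h1 | h1 := (Fin.eq_or_eq_add_one_or_eq_sub_one s.1 k).resolve_left hk
  · obtain ⟨r₀, hr₀⟩ := S.exists_yLinked_iff.2 (h1 ▸ Fin.add_one_ne_sub_one k)
    rw [Fin.ne_iff_eq_rev.1 fun e : r = r₀ => h.2 (e ▸ hr₀),
      Fin.ne_iff_eq_rev.1 fun e : r' = r₀ => h'.2 (e ▸ hr₀)]
  · obtain ⟨r₀, hr₀⟩ := S.exists_xLinked_iff.2 (h1 ▸ (Fin.add_one_ne_sub_one k).symm)
    rw [Fin.ne_iff_eq_rev.1 fun e : r = r₀ => h.1 (e ▸ hr₀),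
      Fin.ne_iff_eq_rev.1 fun e : r' = r₀ => h'.1 (e ▸ hr₀)]

open Classical in
noncomputable def hvPartner (s : Fin 3 × Fin 2) {i : Fin 3} (v : D.HVert i) : D.Vert :=
  if hx : S.m i s (D.hval v) = D.x i then D.pv (i - 1) (if D.hval v = D.x0 i then 0 else 1)
  else if hy : S.m i s (D.hval v) = D.y i then D.pv (i + 1) (if D.hval v = D.y0 i then 0 else 1)
  else D.hv (D.toHVert (S.m i s (D.hval v)) hx hy)

open Classical in
noncomputable def pvPartner (s : Fin 3 × Fin 2) (k : Fin 3) (r : Fin 2) : D.Vert :=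
  if S.XLinked s k r then D.xport (k + 1) r
  else if S.YLinked s k r then D.yport (k - 1) r
  else D.cv k

open Classical in
noncomputable def cvPartner (s : Fin 3 × Fin 2) (k : Fin 3) : D.Vert :=
  if s.1 = k then D.uv else D.pv k (if S.Unlinked s k 0 then 0 else 1)

noncomputable def partner (s : Fin 3 × Fin 2) : D.Vert → D.Vert
  | .inl ⟨_, v⟩ => S.hvPartner s v
  | .inr (.inl (k, t)) => Fin.lastCases (S.cvPartner s k) (S.pvPartner s k) t
  | .inr (.inr _) => D.cv s.1

variable {S} {s : Fin 3 × Fin 2}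

@[simp] theorem partner_hv {i : Fin 3} (v : D.HVert i) : S.partner s (D.hv v) = S.hvPartner s v :=
  rfl

@[simp] theorem partner_pv (k : Fin 3) (r : Fin 2) :
    S.partner s (D.pv k r) = S.pvPartner s k r := by
  simp only [partner, pv, Fin.lastCases_castSucc]

@[simp] theorem partner_cv (k : Fin 3) : S.partner s (D.cv k) = S.cvPartner s k := by
  simp only [partner, cv]
  exact Fin.lastCases_last

@[simp] theorem partner_uv : S.partner s D.uv = D.cv s.1 := rfl

theorem partner_xport {i : Fin 3} {r : Fin 2} (h : S.m i s (D.x i) = D.xn i r) :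
    S.partner s (D.xport i r) = D.pv (i - 1) r := by
  rw [xport, partner_hv, hvPartner, hval_toHVert, dif_pos (S.m_eq_comm.1 h)]
  congr 1
  match r with
  | 0 => exact if_pos rfl
  | 1 => exact if_neg (D.x0_ne_x1 i).symm

theorem partner_yport {i : Fin 3} {r : Fin 2} (h : S.m i s (D.y i) = D.yn i r) :
    S.partner s (D.yport i r) = D.pv (i + 1) r := by
  have hy : S.m i s (D.yn i r) = D.y i := S.m_eq_comm.1 h
  rw [yport, partner_hv, hvPartner, hval_toHVert, dif_neg (hy ▸ (D.adj_xy i).ne'), dif_pos hy]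
  congr 1
  match r with
  | 0 => exact if_pos rfl
  | 1 => exact if_neg (D.y0_ne_y1 i).symm

theorem partner_hv_of_ne {i : Fin 3} {v : D.HVert i} (hx : S.m i s (D.hval v) ≠ D.x i)
    (hy : S.m i s (D.hval v) ≠ D.y i) :
    S.partner s (D.hv v) = D.hv (D.toHVert (S.m i s (D.hval v)) hx hy) := by
  rw [partner_hv, hvPartner, dif_neg hx, dif_neg hy]

theorem exists_hv_eq_xport {i : Fin 3} {v : D.HVert i} (h : S.m i s (D.hval v) = D.x i) :
    ∃ r, D.hv v = D.xport i r ∧ S.m i s (D.x i) = D.xn i r := by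
  obtain hy | ⟨r, hr⟩ := S.x_cases i s
  · exact absurd (S.m_eq_comm.1 h ▸ hy) (D.hval_ne_y v)
  · exact ⟨r, congrArg D.hv (toHVert_eq_iff.2 ((S.m_eq_comm.1 h).symm.trans hr).symm).symm, hr⟩

theorem exists_hv_eq_yport {i : Fin 3} {v : D.HVert i} (h : S.m i s (D.hval v) = D.y i) :
    ∃ r, D.hv v = D.yport i r ∧ S.m i s (D.y i) = D.yn i r := by
  obtain hx | ⟨r, hr⟩ := S.y_cases i s
  · exact absurd (S.m_eq_comm.1 h ▸ hx) (D.hval_ne_x v)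
  · exact ⟨r, congrArg D.hv (toHVert_eq_iff.2 ((S.m_eq_comm.1 h).symm.trans hr).symm).symm, hr⟩

theorem partner_pv_of_xLinked {k : Fin 3} {r : Fin 2} (h : S.XLinked s k r) :
    S.partner s (D.pv k r) = D.xport (k + 1) r := by
  rw [partner_pv, pvPartner, if_pos h]

theorem partner_pv_of_yLinked {k : Fin 3} {r : Fin 2} (h : S.YLinked s k r) :
    S.partner s (D.pv k r) = D.yport (k - 1) r := by
  rw [partner_pv, pvPartner, if_neg fun hx => S.not_xLinked_and_yLinked s k r ⟨hx, h⟩, if_pos h]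

theorem partner_pv_of_unlinked {k : Fin 3} {r : Fin 2} (h : S.Unlinked s k r) :
    S.partner s (D.pv k r) = D.cv k := by
  rw [partner_pv, pvPartner, if_neg h.1, if_neg h.2]

theorem partner_cv_of_fst_eq {k : Fin 3} (h : s.1 = k) : S.partner s (D.cv k) = D.uv := by
  rw [partner_cv, cvPartner, if_pos h]

theorem partner_cv_of_unlinked {k : Fin 3} {r : Fin 2} (h : S.Unlinked s k r) :
    S.partner s (D.cv k) = D.pv k r := by
  rw [partner_cv, cvPartner, if_neg ((S.exists_unlinked_iff s k).1 ⟨r, h⟩), pv_inj]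
  refine ⟨rfl, ?_⟩
  split_ifs with h0
  · exact S.unlinked_unique h0 h
  · exact (Fin.ne_iff_eq_rev.1 fun e : r = 0 => h0 (e ▸ h)).symm

variable (S)

theorem partner_partner (s : Fin 3 × Fin 2) (p : D.Vert) : S.partner s (S.partner s p) = p := by
  revert p
  refine forall_vert.2 ⟨fun i v => ?_, fun k r => ?_, fun k => ?_, ?_⟩
  · by_cases hx : S.m i s (D.hval v) = D.x i
    · obtain ⟨r, hv, hr⟩ := S.exists_hv_eq_xport hx
      have hl : S.XLinked s (i - 1) r := by rw [XLinked, sub_add_cancel]; exact hr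
      rw [hv, partner_xport hr, partner_pv_of_xLinked hl, sub_add_cancel]
    by_cases hy : S.m i s (D.hval v) = D.y i
    · obtain ⟨r, hv, hr⟩ := S.exists_hv_eq_yport hy
      have hl : S.YLinked s (i + 1) r := by rw [YLinked, add_sub_cancel_right]; exact hr
      rw [hv, partner_yport hr, partner_pv_of_yLinked hl, add_sub_cancel_right]
    set w := D.toHVert (S.m i s (D.hval v)) hx hy
    have hw : S.m i s (D.hval w) = D.hval v := S.m_m i s (D.hval v)
    rw [partner_hv_of_ne hx hy, partner_hv_of_ne (v := w) (hw ▸ D.hval_ne_x v)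
      (hw ▸ D.hval_ne_y v), hv_inj, toHVert_eq_iff, hw]
  · by_cases hx : S.XLinked s k r
    · rw [partner_pv_of_xLinked hx, partner_xport hx, add_sub_cancel_right]
    by_cases hy : S.YLinked s k r
    · rw [partner_pv_of_yLinked hy, partner_yport hy, sub_add_cancel]
    rw [partner_pv_of_unlinked ⟨hx, hy⟩, partner_cv_of_unlinked ⟨hx, hy⟩]
  · by_cases hk : s.1 = k
    · rw [partner_cv_of_fst_eq hk, partner_uv, hk]
    obtain ⟨r, hr⟩ := (S.exists_unlinked_iff s k).2 hk
    rw [partner_cv_of_unlinked hr, partner_pv_of_unlinked hr]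
  · rw [partner_uv, partner_cv_of_fst_eq rfl]

theorem adj_partner (s : Fin 3 × Fin 2) (p : D.Vert) : D.graph.Adj p (S.partner s p) := by
  revert p
  refine forall_vert.2 ⟨fun i v => ?_, fun k r => ?_, fun k => ?_, ?_⟩
  · by_cases hx : S.m i s (D.hval v) = D.x i
    · obtain ⟨r, hv, hr⟩ := S.exists_hv_eq_xport hx
      rw [hv, partner_xport hr]
      simpa only [sub_add_cancel] using (D.adj_pv_xport (i - 1) r).symm
    by_cases hy : S.m i s (D.hval v) = D.y i
    · obtain ⟨r, hv, hr⟩ := S.exists_hv_eq_yport hy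
      rw [hv, partner_yport hr]
      simpa only [add_sub_cancel_right] using (D.adj_pv_yport (i + 1) r).symm
    rw [partner_hv_of_ne hx hy]
    exact adj_hv ((S.isPartnerCover i).adj s (D.hval v))
  · by_cases hx : S.XLinked s k r
    · rw [partner_pv_of_xLinked hx]; exact D.adj_pv_xport k r
    by_cases hy : S.YLinked s k r
    · rw [partner_pv_of_yLinked hy]; exact D.adj_pv_yport k r
    rw [partner_pv_of_unlinked ⟨hx, hy⟩]; exact (D.adj_cv_pv k r).symm
  · by_cases hk : s.1 = k
    · rw [partner_cv_of_fst_eq hk]; exact D.adj_cv_uv k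
    obtain ⟨r, hr⟩ := (S.exists_unlinked_iff s k).2 hk
    rw [partner_cv_of_unlinked hr]; exact D.adj_cv_pv k r
  · exact (D.adj_cv_uv s.1).symm

variable {S}

theorem partner_hv_eq_hv_iff {i : Fin 3} {v w : D.HVert i} :
    S.partner s (D.hv v) = D.hv w ↔ S.m i s (D.hval v) = D.hval w := by
  by_cases hx : S.m i s (D.hval v) = D.x i
  · rw [partner_hv, hvPartner, dif_pos hx, hx]
    exact iff_of_false (hv_ne_pv _ _ _).symm fun h => D.hval_ne_x w h.symm
  by_cases hy : S.m i s (D.hval v) = D.y i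
  · rw [partner_hv, hvPartner, dif_neg hx, dif_pos hy, hy]
    exact iff_of_false (hv_ne_pv _ _ _).symm fun h => D.hval_ne_y w h.symm
  rw [partner_hv_of_ne hx hy, hv_inj, toHVert_eq_iff]

theorem partner_pv_eq_xport_iff {k : Fin 3} {r : Fin 2} :
    S.partner s (D.pv k r) = D.xport (k + 1) r ↔ S.XLinked s k r := by
  rw [partner_pv, pvPartner]
  split_ifs with hx hy
  · exact iff_of_true rfl hx
  · exact iff_of_false (xport_ne_yport k r r).symm hx
  · exact iff_of_false (hv_ne_cv _ _).symm hx

theorem partner_pv_eq_yport_iff {k : Fin 3} {r : Fin 2} :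
    S.partner s (D.pv k r) = D.yport (k - 1) r ↔ S.YLinked s k r := by
  rw [partner_pv, pvPartner]
  split_ifs with hx hy
  · exact iff_of_false (xport_ne_yport k r r) fun hy =>
      S.not_xLinked_and_yLinked s k r ⟨hx, hy⟩
  · exact iff_of_true rfl hy
  · exact iff_of_false (hv_ne_cv _ _).symm hy

theorem partner_pv_eq_cv_iff {k : Fin 3} {r : Fin 2} :
    S.partner s (D.pv k r) = D.cv k ↔ S.Unlinked s k r := by
  rw [partner_pv, pvPartner]
  split_ifs with hx hy
  · exact iff_of_false (hv_ne_cv _ _) fun h => h.1 hx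
  · exact iff_of_false (hv_ne_cv _ _) fun h => h.2 hy
  · exact iff_of_true rfl ⟨hx, hy⟩

variable (S)

theorem ncard_xLinked (k : Fin 3) (r : Fin 2) : {s | S.XLinked s k r}.ncard = 2 :=
  (S.isPartnerCover (k + 1)).ncard_eq_two (D.adj_x_xn _ r)

theorem ncard_yLinked (k : Fin 3) (r : Fin 2) : {s | S.YLinked s k r}.ncard = 2 :=
  (S.isPartnerCover (k - 1)).ncard_eq_two (D.adj_y_yn _ r)

theorem ncard_unlinked (k : Fin 3) (r : Fin 2) : {s | S.Unlinked s k r}.ncard = 2 := by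
  have hdisj : Disjoint {s | S.XLinked s k r} {s | S.YLinked s k r} :=
    Set.disjoint_left.2 fun s hx hy => S.not_xLinked_and_yLinked s k r ⟨hx, hy⟩
  have hcompl : {s | S.Unlinked s k r} = ({s | S.XLinked s k r} ∪ {s | S.YLinked s k r})ᶜ := by
    ext s; simp [Unlinked]
  have := Set.ncard_add_ncard_compl ({s | S.XLinked s k r} ∪ {s | S.YLinked s k r})
  rw [Set.ncard_union_eq hdisj, ncard_xLinked, ncard_yLinked, ← hcompl,
    Nat.card_eq_fintype_card] at this
  simp only [Fintype.card_prod, Fintype.card_fin] at this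
  omega

theorem ncard_partner_of_rel {p q : D.Vert} (h : D.rel p q) :
    {s | S.partner s p = q}.ncard = 2 := by
  have hcomm := Set.ncard_setOf_apply_eq_comm (S.partner_partner)
  rcases h with ⟨i, v, w, h, rfl, rfl⟩ | ⟨k, rfl, rfl⟩ | ⟨k, rfl, rfl⟩
    | ⟨k, rfl, rfl⟩ | ⟨k, rfl, rfl⟩ | ⟨k, rfl, rfl | rfl | rfl⟩
  · simp only [partner_hv_eq_hv_iff]; exact (S.isPartnerCover i).ncard_eq_two h
  · exact (congrArg _ (Set.ext fun _ => partner_pv_eq_xport_iff)).trans (S.ncard_xLinked k 0)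
  · exact (congrArg _ (Set.ext fun _ => partner_pv_eq_yport_iff)).trans (S.ncard_yLinked k 0)
  · exact (congrArg _ (Set.ext fun _ => partner_pv_eq_xport_iff)).trans (S.ncard_xLinked k 1)
  · exact (congrArg _ (Set.ext fun _ => partner_pv_eq_yport_iff)).trans (S.ncard_yLinked k 1)
  · rw [hcomm]
    exact (congrArg _ (Set.ext fun _ => partner_pv_eq_cv_iff)).trans (S.ncard_unlinked k 0)
  · rw [hcomm]
    exact (congrArg _ (Set.ext fun _ => partner_pv_eq_cv_iff)).trans (S.ncard_unlinked k 1)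
  · rw [hcomm]; simpa only [partner_uv, cv_inj, Nat.card_eq_fintype_card, Fintype.card_fin] using
      Set.ncard_setOf_fst_eq (β := Fin 2) k

theorem isPartnerCover_graph : D.graph.IsPartnerCover S.partner where
  involutive := S.partner_partner
  adj := S.adj_partner
  ncard_eq_two p q h := by
    obtain ⟨-, h | h⟩ := (fromRel_adj _ _ _).1 h
    · exact S.ncard_partner_of_rel h
    · rw [Set.ncard_setOf_apply_eq_comm S.partner_partner]; exact S.ncard_partner_of_rel h

end SlotCover

theorem SlotCover.hasBFCover (S : D.SlotCover) : HasBFCover D.graph :=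
  hasBFCover_iff_exists_isPartnerCover.2
    ⟨_, S.isPartnerCover_graph.comp_bijective
      (finProdFinEquiv (m := 3) (n := 2)).symm.bijective⟩

/-- The role of slot `s` in `G i`, read off from `(s.1 - i, s.2)`: `0` is closed, `-1 = 2` is
the `x`-port `s.2` and `1` is the `y`-port `s.2.rev`. -/
def slotRole (s : Fin 3 × Fin 2) : Fin 2 ⊕ Fin 2 ⊕ Fin 2 :=
  ![.inl s.2, .inr (.inr s.2.rev), .inr (.inl s.2)] s.1

theorem slotRole_injective : slotRole.Injective := by decide

theorem exists_slotPartners {i : Fin 3} (hc : IsCubic (D.G i)) (hbf : HasBFCover (D.G i)) :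
    ∃ m : Fin 3 × Fin 2 → D.V i → D.V i, (D.G i).IsPartnerCover m ∧
      (∀ s, m s (D.x i) = D.y i ∨ ∃ r, m s (D.x i) = D.xn i r) ∧
      (∀ s, m s (D.y i) = D.x i ∨ ∃ r, m s (D.y i) = D.yn i r) ∧
      (∀ r, m (i, r) (D.x i) = D.y i) ∧ (∀ r, m (i - 1, r) (D.x i) = D.xn i r) ∧
      (∀ r, m (i + 1, r) (D.y i) = D.yn i r.rev) := by
  obtain ⟨f, hf⟩ := hasBFCover_iff_exists_isPartnerCover.1 hbf
  have hx (t : Fin 6) : f t (D.x i) = D.y i ∨ ∃ r, f t (D.x i) = D.xn i r := by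
    rcases hc.eq_or_eq_or_eq_of_adj (D.adj_xy i) (D.adj_xx0 i) (D.adj_xx1 i) (D.x0_ne_y i).symm
      (D.x1_ne_y i).symm (D.x0_ne_x1 i) (hf.adj t _) with h | h | h
    exacts [Or.inl h, Or.inr ⟨0, h⟩, Or.inr ⟨1, h⟩]
  have hy (t : Fin 6) : f t (D.y i) = D.x i ∨ ∃ r, f t (D.y i) = D.yn i r := by
    rcases hc.eq_or_eq_or_eq_of_adj (D.adj_xy i).symm (D.adj_yy0 i) (D.adj_yy1 i)
      (D.y0_ne_x i).symm (D.y1_ne_x i).symm (D.y0_ne_y1 i) (hf.adj t _) with h | h | h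
    exacts [Or.inl h, Or.inr ⟨0, h⟩, Or.inr ⟨1, h⟩]
  obtain ⟨e, he, hrole⟩ := hf.exists_injective_roles (D.adj_xy i) (D.adj_x_xn i) (D.adj_y_yn i)
    (D.x0_ne_x1 i) (D.xn_ne_y i) (D.yn_ne_x i) hx hy
  let σ : Fin 3 × Fin 2 → Fin 6 := fun s => e (slotRole (s.1 - i, s.2))
  have hσ : σ.Bijective := by
    refine (Fintype.bijective_iff_injective_and_card σ).2 ⟨?_, rfl⟩
    exact he.comp (slotRole_injective.comp (Prod.map_injective.2 ⟨sub_left_injective,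
      Function.injective_id⟩))
  refine ⟨fun s => f (σ s), hf.comp_bijective hσ, fun s => hx _, fun s => hy _, fun r => ?_,
    fun r => ?_, fun r => ?_⟩
  · simpa [σ, slotRole] using (hrole r).1
  · simpa [σ, slotRole, sub_sub_cancel_left] using (hrole r).2.1
  · simpa [σ, slotRole] using (hrole r.rev).2.2

theorem exists_slotCover (hc : ∀ i, IsCubic (D.G i)) (hbf : ∀ i, HasBFCover (D.G i)) :
    Nonempty D.SlotCover := by
  choose m hm hx hy hclosed hx_open hy_open using fun i => exists_slotPartners (hc i) (hbf i)
  exact ⟨⟨m, hm, hx, hy, hclosed, hx_open, hy_open⟩⟩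

end WindmillData

theorem windmill_bfCover_general (D : WindmillData) (hc : ∀ i, IsCubic (D.G i))
    (hbf : ∀ i, HasBFCover (D.G i)) :
    HasBFCover D.graph := by
  obtain ⟨S⟩ := D.exists_slotCover hc hbf
  exact S.hasBFCover

/-- If `G 0, G 1, G 2` are cubic bridgeless graphs each
admitting a Berge–Fulkerson cover, then any graph obtained from them by the
windmill construction admits a Berge–Fulkerson cover. -/
theorem windmill_bfCover (D : WindmillData) (hfin : ∀ i, Finite (D.V i))
    (hc : ∀ i, IsCubic (D.G i)) (hb : ∀ i, IsBridgeless (D.G i))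
    (hbf : ∀ i, HasBFCover (D.G i)) :
    HasBFCover D.graph :=
  windmill_bfCover_general D hc hbf
end

section
/- Let G be a cubic graph and 𝓒 a cycle cover of G. Then (i) 𝓒 has length exactly (4/3)|E(G)| if and only if the set of edges covered twice by 𝓒 is a perfect matching of G; and (ii) 𝓒 has length exactly (4/3)|E(G)| + 1 if and only if the set of edges covered twice by 𝓒 forms a 1-parity subgraph of G (in either case every edge is covered at most twice). -/
open SimpleGraph

/-- A set of edges of `G` forming a perfect matching: every vertex belongs to
exactly one edge of `S`. -/
def IsPerfectMatchingSet {V : Type*} (G : SimpleGraph V) (S : Set (Sym2 V)) : Prop :=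
  S ⊆ G.edgeSet ∧ ∀ v : V, ∃! e, e ∈ S ∧ v ∈ e

/-- The number of edges of `S` containing the vertex `v`. -/
noncomputable def edgeDegree {V : Type*} (S : Set (Sym2 V)) (v : V) : ℕ :=
  {e ∈ S | v ∈ e}.ncard

/-- A `k`-parity subgraph of a cubic graph, given by its edge set: a spanning
subgraph in which every vertex has degree 1, except `k` vertices of degree 3. -/
def IsParitySubgraph {V : Type*} (G : SimpleGraph V) (k : ℕ) (S : Set (Sym2 V)) : Prop :=
  S ⊆ G.edgeSet ∧ (∀ v : V, edgeDegree S v = 1 ∨ edgeDegree S v = 3) ∧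
    {v : V | edgeDegree S v = 3}.ncard = k

/-- A cycle cover of `G` with `m` members: a family of cycles (subgraphs in which
every vertex has even degree) covering every edge of `G`. -/
structure CycleCover {V : Type*} (G : SimpleGraph V) (m : ℕ) where
  cyc : Fin m → G.Subgraph
  even_deg : ∀ (t : Fin m) (v : V), Even (((cyc t).neighborSet v).ncard)
  covers : ∀ e ∈ G.edgeSet, ∃ t, e ∈ (cyc t).edgeSet

/-- The length of a cycle cover: the sum of the numbers of edges of its cycles. -/
noncomputable def CycleCover.length {V : Type*} {G : SimpleGraph V} {m : ℕ}
    (C : CycleCover G m) : ℕ :=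
  ∑ t : Fin m, ((C.cyc t).edgeSet).ncard

/-- `𝓒(e)`: the members of the cycle cover containing the edge `e`. -/
def CycleCover.onEdge {V : Type*} {G : SimpleGraph V} {m : ℕ}
    (C : CycleCover G m) (e : Sym2 V) : Set (Fin m) :=
  {t | e ∈ (C.cyc t).edgeSet}

/-- The set of edges covered (at least) twice by the cycle cover. -/
def CycleCover.doubled {V : Type*} {G : SimpleGraph V} {m : ℕ}
    (C : CycleCover G m) : Set (Sym2 V) :=
  {e | 2 ≤ (C.onEdge e).ncard}

/-- The length of a shortest cycle cover of `G` (`⊤` if `G` has no cycle cover). -/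
noncomputable def scc {V : Type*} (G : SimpleGraph V) : ℕ∞ :=
  sInf {L : ℕ∞ | ∃ (m : ℕ) (C : CycleCover G m), L = (C.length : ℕ∞)}

section Aux
open Finset
open scoped Classical

variable {V : Type} [Fintype V] {G : SimpleGraph V} {m : ℕ}

/-- edges of a subgraph at a vertex, as the image of the neighbor set -/
lemma incid_eq_image (H : G.Subgraph) (v : V) :
    {e | e ∈ H.edgeSet ∧ v ∈ e} = (fun w => s(v, w)) '' H.neighborSet v := by
  ext e
  constructor
  · rintro ⟨he, hv⟩
    induction e with
    | h a b =>
      rw [SimpleGraph.Subgraph.mem_edgeSet] at he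
      rw [Sym2.mem_iff] at hv
      rcases hv with rfl | rfl
      · exact ⟨b, he, rfl⟩
      · exact ⟨a, he.symm, Sym2.eq_swap.symm⟩
  · rintro ⟨w, hw, rfl⟩
    exact ⟨SimpleGraph.Subgraph.mem_edgeSet.mpr hw, Sym2.mem_mk_left _ _⟩

lemma incid_ncard (H : G.Subgraph) (v : V) :
    {e | e ∈ H.edgeSet ∧ v ∈ e}.ncard = (H.neighborSet v).ncard := by
  rw [incid_eq_image, Set.ncard_image_of_injective _ (fun a b h => Sym2.congr_right.mp h)]

/-- the finset of edges of `G` -/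
noncomputable def Efin (G : SimpleGraph V) : Finset (Sym2 V) :=
  (Set.toFinite G.edgeSet).toFinset

lemma mem_Efin {e : Sym2 V} : e ∈ Efin G ↔ e ∈ G.edgeSet :=
  Set.Finite.mem_toFinset _

/-- the finset of edges of `G` at a vertex -/
noncomputable def inc (G : SimpleGraph V) (v : V) : Finset (Sym2 V) :=
  (Efin G).filter (fun e => v ∈ e)

lemma mem_inc {e : Sym2 V} {v : V} : e ∈ inc G v ↔ e ∈ G.edgeSet ∧ v ∈ e := by
  simp [inc, mem_Efin]

lemma card_inc (hG : IsCubic G) (v : V) : (inc G v).card = 3 := by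
  have h1 : ((inc G v : Finset (Sym2 V)) : Set (Sym2 V))
      = {e | e ∈ (⊤ : G.Subgraph).edgeSet ∧ v ∈ e} := by
    ext e; simp [mem_inc, SimpleGraph.Subgraph.edgeSet_top]
  have := incid_ncard (G := G) ⊤ v
  rw [← h1, Set.ncard_coe_finset, SimpleGraph.Subgraph.neighborSet_top] at this
  rw [this, hG v]

/-- multiplicity of an edge in the cycle cover -/
noncomputable def CCmult (C : CycleCover G m) (e : Sym2 V) : ℕ := (C.onEdge e).ncard

lemma CCmult_eq_card (C : CycleCover G m) (e : Sym2 V) :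
    CCmult C e = (Finset.univ.filter fun t => e ∈ (C.cyc t).edgeSet).card := by
  rw [CCmult, CycleCover.onEdge, Set.ncard_eq_toFinset_card', Set.toFinset_setOf]

lemma sum_CCmult_eq (C : CycleCover G m) (A : Finset (Sym2 V)) :
    ∑ e ∈ A, CCmult C e = ∑ t : Fin m, (A.filter fun e => e ∈ (C.cyc t).edgeSet).card := by
  simp_rw [CCmult_eq_card, Finset.card_filter]
  exact Finset.sum_comm

lemma length_eq_sum (C : CycleCover G m) :
    C.length = ∑ e ∈ Efin G, CCmult C e := by
  rw [sum_CCmult_eq, CycleCover.length]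
  refine Finset.sum_congr rfl fun t _ => ?_
  have h1 : ((Efin G).filter fun e => e ∈ (C.cyc t).edgeSet)
      = (Set.toFinite (C.cyc t).edgeSet).toFinset := by
    ext e
    simp only [Finset.mem_filter, mem_Efin, Set.Finite.mem_toFinset]
    exact ⟨fun h => h.2, fun h => ⟨(C.cyc t).edgeSet_subset h, h⟩⟩
  rw [h1, Set.ncard_eq_toFinset_card _ (Set.toFinite _)]

lemma localsum_eq (C : CycleCover G m) (v : V) :
    ∑ e ∈ inc G v, CCmult C e = ∑ t : Fin m, ((C.cyc t).neighborSet v).ncard := by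
  rw [sum_CCmult_eq]
  refine Finset.sum_congr rfl fun t _ => ?_
  have h1 : (((inc G v).filter fun e => e ∈ (C.cyc t).edgeSet) : Set (Sym2 V))
      = {e | e ∈ (C.cyc t).edgeSet ∧ v ∈ e} := by
    ext e
    simp only [Finset.coe_filter, mem_inc, Set.mem_setOf_eq]
    exact ⟨fun h => ⟨h.2, h.1.2⟩, fun h => ⟨⟨(C.cyc t).edgeSet_subset h.1, h.2⟩, h.1⟩⟩
  have := congrArg Set.ncard h1
  rw [Set.ncard_coe_finset, incid_ncard] at this
  rw [this]

lemma sum_over_vertices (f : Sym2 V → ℕ) :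
    ∑ v : V, ∑ e ∈ inc G v, f e = 2 * ∑ e ∈ Efin G, f e := by
  have h1 : ∀ v : V, ∑ e ∈ inc G v, f e = ∑ e ∈ Efin G, if v ∈ e then f e else 0 :=
    fun v => by rw [inc, Finset.sum_filter]
  simp_rw [h1]
  rw [Finset.sum_comm]
  rw [Finset.mul_sum]
  refine Finset.sum_congr rfl fun e he => ?_
  rw [mem_Efin] at he
  induction e with
  | h a b =>
    have hab : G.Adj a b := he
    have hne : a ≠ b := hab.ne
    have h2 : (Finset.univ.filter fun v : V => v ∈ s(a, b)) = {a, b} := by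
      ext v; simp [Sym2.mem_iff]
    rw [← Finset.sum_filter, h2, Finset.sum_pair hne, two_mul]

end Aux

section Aux2
open Finset
open scoped Classical

variable {V : Type} [Fintype V] {G : SimpleGraph V} {m : ℕ}

lemma mem_doubled_iff (C : CycleCover G m) (e : Sym2 V) :
    e ∈ C.doubled ↔ 2 ≤ CCmult C e := Iff.rfl

lemma other_endpoint {e : Sym2 V} (hE : e ∈ G.edgeSet) {v : V} (hv : v ∈ e) :
    ∃ u, u ≠ v ∧ u ∈ e := by
  induction e with
  | h a b =>
    have hab : G.Adj a b := hE
    rw [Sym2.mem_iff] at hv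
    rcases hv with rfl | rfl
    · exact ⟨b, hab.ne', Sym2.mem_mk_right _ _⟩
    · exact ⟨a, hab.ne, Sym2.mem_mk_left _ _⟩

lemma sum_ge_card {α : Type*} (s : Finset α) (f : α → ℕ) (h : ∀ e ∈ s, 1 ≤ f e) :
    s.card ≤ ∑ e ∈ s, f e := by
  calc s.card = ∑ _e ∈ s, 1 := by simp
  _ ≤ ∑ e ∈ s, f e := Finset.sum_le_sum h

lemma even_finset_sum {α : Type*} (s : Finset α) (f : α → ℕ) (h : ∀ x ∈ s, Even (f x)) :
    Even (∑ x ∈ s, f x) :=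
  Finset.sum_induction f Even (fun _ _ ha hb => ha.add hb) Even.zero h

lemma three_sum_four {α : Type*} (s : Finset α) (f : α → ℕ) (hc : s.card = 3)
    (h1 : ∀ e ∈ s, 1 ≤ f e) (h4 : ∑ e ∈ s, f e = 4) :
    (∀ e ∈ s, f e ≤ 2) ∧ ∃ e0, (e0 ∈ s ∧ 2 ≤ f e0) ∧ ∀ e ∈ s, 2 ≤ f e → e = e0 := by
  classical
  have key : ∀ e ∈ s, f e + 2 ≤ 4 := by
    intro e he
    have h2 : f e + ∑ x ∈ s.erase e, f x = ∑ x ∈ s, f x := Finset.add_sum_erase s f he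
    have h3 : (s.erase e).card ≤ ∑ x ∈ s.erase e, f x :=
      sum_ge_card _ _ (fun x hx => h1 x (Finset.mem_of_mem_erase hx))
    rw [Finset.card_erase_of_mem he, hc] at h3
    omega
  refine ⟨fun e he => by have := key e he; omega, ?_⟩
  have hex : ∃ e ∈ s, 2 ≤ f e := by
    by_contra h
    push_neg at h
    have h5 : ∑ e ∈ s, f e ≤ ∑ _e ∈ s, 1 :=
      Finset.sum_le_sum (fun e he => by have := h e he; omega)
    rw [Finset.sum_const, hc] at h5
    simp at h5
    omega
  obtain ⟨e0, he0, hf0⟩ := hex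
  refine ⟨e0, ⟨he0, hf0⟩, ?_⟩
  intro e' he' hf'
  by_contra hne
  have h2 : f e' + ∑ x ∈ s.erase e', f x = 4 := by
    rw [Finset.add_sum_erase s f he']; exact h4
  have he0' : e0 ∈ s.erase e' := Finset.mem_erase.mpr ⟨fun h => hne h.symm, he0⟩
  have h3 : f e0 + ∑ x ∈ (s.erase e').erase e0, f x = ∑ x ∈ s.erase e', f x :=
    Finset.add_sum_erase _ f he0'
  have h5 : ((s.erase e').erase e0).card ≤ ∑ x ∈ (s.erase e').erase e0, f x :=
    sum_ge_card _ _
      (fun x hx => h1 x (Finset.mem_of_mem_erase (Finset.mem_of_mem_erase hx)))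
  rw [Finset.card_erase_of_mem he0', Finset.card_erase_of_mem he', hc] at h5
  omega

end Aux2

/-- Let `G` be a cubic graph and `𝓒` a cycle cover of `G`.
Then (i) `𝓒` has length exactly `(4/3)|E(G)|` iff the set of edges covered
twice by `𝓒` is a perfect matching of `G`, and (ii) `𝓒` has length exactly
`(4/3)|E(G)| + 1` iff the set of edges covered twice by `𝓒` is a 1-parity
subgraph of `G` — in either case every edge is covered at most twice. -/


theorem cycleCover_length_characterization {V : Type} [Fintype V]
    (G : SimpleGraph V) (hG : IsCubic G) (m : ℕ) (C : CycleCover G m) :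
    (3 * C.length = 4 * G.edgeSet.ncard ↔
      IsPerfectMatchingSet G C.doubled ∧ ∀ e, (C.onEdge e).ncard ≤ 2) ∧
    (3 * C.length = 4 * G.edgeSet.ncard + 3 ↔
      IsParitySubgraph G 1 C.doubled ∧ ∀ e, (C.onEdge e).ncard ≤ 2) := by
  classical
  have hmu_eq : ∀ e : Sym2 V, (C.onEdge e).ncard = CCmult C e := fun _ => rfl
  have hmu_mem : ∀ e : Sym2 V, 1 ≤ CCmult C e → e ∈ G.edgeSet := by
    intro e h
    obtain ⟨t, ht⟩ := Set.nonempty_of_ncard_ne_zero (by rw [hmu_eq e]; omega : (C.onEdge e).ncard ≠ 0)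
    exact (C.cyc t).edgeSet_subset ht
  have hmu_one : ∀ e ∈ Efin G, 1 ≤ CCmult C e := by
    intro e he
    obtain ⟨t, ht⟩ := C.covers e (mem_Efin.mp he)
    have h1 : 0 < CCmult C e := (Set.ncard_pos (Set.toFinite _)).mpr ⟨t, ht⟩
    omega
  have hmu_one' : ∀ v : V, ∀ e ∈ inc G v, 1 ≤ CCmult C e := by
    intro v e he
    exact hmu_one e (mem_Efin.mpr (mem_inc.mp he).1)
  have hmu_zero : ∀ e : Sym2 V, e ∉ G.edgeSet → CCmult C e = 0 := by
    intro e he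
    by_contra h
    exact he (hmu_mem e (by omega))
  set F : V → ℕ := fun v => ∑ e ∈ inc G v, CCmult C e with hF
  have hcard_inc : ∀ v, (inc G v).card = 3 := card_inc hG
  have hF_even : ∀ v, Even (F v) := by
    intro v
    rw [hF]
    simp only [localsum_eq C v]
    exact even_finset_sum _ _ (fun t _ => C.even_deg t v)
  have hF4 : ∀ v, 4 ≤ F v := by
    intro v
    have h3 : 3 ≤ F v := by
      have := sum_ge_card (inc G v) (CCmult C) (hmu_one' v)
      rw [hcard_inc v] at this; exact this
    obtain ⟨k, hk⟩ := hF_even v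
    omega
  have hsumF : ∑ v : V, F v = 2 * C.length := by
    rw [length_eq_sum C]; exact sum_over_vertices (CCmult C)
  set n := Fintype.card V with hn
  have hhs : 2 * (Efin G).card = 3 * n := by
    have h1 := sum_over_vertices (G := G) (fun _ => (1 : ℕ))
    have h2 : ∀ v ∈ (Finset.univ : Finset V), ∑ _e ∈ inc G v, (1 : ℕ) = 3 := by
      intro v _
      rw [Finset.sum_const, hcard_inc v]; simp
    rw [Finset.sum_congr rfl h2] at h1
    simp only [Finset.sum_const, Finset.card_univ, smul_eq_mul, mul_one] at h1
    omega
  have hEcard : G.edgeSet.ncard = (Efin G).card := Set.ncard_eq_toFinset_card _ _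
  -- the key local lemmas
  have key : ∀ v : V, F v = 4 →
      (∀ e ∈ inc G v, CCmult C e ≤ 2) ∧
        ∃ e0, (e0 ∈ inc G v ∧ 2 ≤ CCmult C e0) ∧
          ∀ e ∈ inc G v, 2 ≤ CCmult C e → e = e0 := by
    intro v h4
    exact three_sum_four _ _ (hcard_inc v) (hmu_one' v) h4
  have hF4_of : ∀ v : V,
      (∃ e0, (e0 ∈ inc G v ∧ 2 ≤ CCmult C e0) ∧
        ∀ e ∈ inc G v, 2 ≤ CCmult C e → e = e0) →
      (∀ e ∈ inc G v, CCmult C e ≤ 2) → F v = 4 := by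
    rintro v ⟨e0, ⟨he0s, he02⟩, huniq⟩ hb
    have hm2 : CCmult C e0 = 2 := le_antisymm (hb e0 he0s) he02
    have hrest : ∀ e ∈ (inc G v).erase e0, CCmult C e = 1 := by
      intro e he
      obtain ⟨hne, hes⟩ := Finset.mem_erase.mp he
      have h1 := hmu_one' v e hes
      by_contra h
      exact hne (huniq e hes (by omega))
    have hsum : F v = CCmult C e0 + ∑ e ∈ (inc G v).erase e0, CCmult C e :=
      (Finset.add_sum_erase _ _ he0s).symm
    rw [hsum, hm2, Finset.sum_const_nat hrest, Finset.card_erase_of_mem he0s, hcard_inc v]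
  -- edgeDegree as a finset card
  have hdegf : ∀ v : V, edgeDegree C.doubled v
      = ((inc G v).filter fun e => 2 ≤ CCmult C e).card := by
    intro v
    have hset : {e | e ∈ C.doubled ∧ v ∈ e}
        = ↑((inc G v).filter fun e => 2 ≤ CCmult C e) := by
      ext e
      simp only [Set.mem_setOf_eq, Finset.coe_filter, mem_inc, mem_doubled_iff]
      constructor
      · rintro ⟨hd, hv⟩
        exact ⟨⟨hmu_mem e (by omega), hv⟩, hd⟩
      · rintro ⟨⟨_, hv⟩, hd⟩
        exact ⟨hd, hv⟩
    show {e | e ∈ C.doubled ∧ v ∈ e}.ncard = _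
    rw [hset, Set.ncard_coe_finset]
  -- helpers for membership
  have hd_inc : ∀ (v : V) (e : Sym2 V), e ∈ C.doubled → v ∈ e → e ∈ inc G v := by
    intro v e hd hv
    have h2 : 2 ≤ CCmult C e := (mem_doubled_iff C e).mp hd
    exact mem_inc.mpr ⟨hmu_mem e (by omega), hv⟩
  have hbound_of : (∀ v : V, ∀ e ∈ inc G v, CCmult C e ≤ 2) →
      ∀ e, (C.onEdge e).ncard ≤ 2 := by
    intro hb e
    rw [hmu_eq]
    by_cases he : e ∈ G.edgeSet
    · induction e with
      | h a b => exact hb a _ (mem_inc.mpr ⟨he, Sym2.mem_mk_left _ _⟩)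
    · rw [hmu_zero e he]; omega
  constructor
  · constructor
    · intro h
      have hL : C.length = 2 * n := by omega
      have hsum4 : ∑ _v : V, (4 : ℕ) = ∑ v : V, F v := by
        rw [Finset.sum_const, Finset.card_univ, smul_eq_mul, hsumF]
        omega
      have hFall : ∀ v : V, F v = 4 := by
        have h2 := (Finset.sum_eq_sum_iff_of_le (fun v _ => hF4 v)).mp hsum4
        intro v; exact (h2 v (Finset.mem_univ v)).symm
      refine ⟨⟨?_, ?_⟩, hbound_of (fun v e he => (key v (hFall v)).1 e he)⟩
      · intro e he
        have h2 : 2 ≤ CCmult C e := (mem_doubled_iff C e).mp he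
        exact hmu_mem e (by omega)
      · intro v
        obtain ⟨-, e0, ⟨he0s, he02⟩, huniq⟩ := key v (hFall v)
        refine ⟨e0, ⟨(mem_doubled_iff C e0).mpr he02, (mem_inc.mp he0s).2⟩, ?_⟩
        rintro e' ⟨hd', hv'⟩
        exact huniq e' (hd_inc v e' hd' hv') ((mem_doubled_iff C e').mp hd')
    · rintro ⟨⟨hsub, hpm⟩, hbound⟩
      have hFall : ∀ v : V, F v = 4 := by
        intro v
        obtain ⟨e0, ⟨hd0, hv0⟩, huniq⟩ := hpm v
        refine hF4_of v ⟨e0, ⟨hd_inc v e0 hd0 hv0, (mem_doubled_iff C e0).mp hd0⟩, ?_⟩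
          (fun e _ => by rw [← hmu_eq]; exact hbound e)
        intro e he h2
        exact huniq e ⟨(mem_doubled_iff C e).mpr h2, (mem_inc.mp he).2⟩
      have hsum4 : ∑ v : V, F v = n * 4 := by
        rw [Finset.sum_congr rfl (fun v _ => hFall v), Finset.sum_const,
          Finset.card_univ, smul_eq_mul]
      omega
  · constructor
    · intro h
      have hL : C.length = 2 * n + 1 := by omega
      have hsum2 : ∑ v : V, F v = 4 * n + 2 := by rw [hsumF, hL]; ring
      have hex : ∃ v0 : V, F v0 ≠ 4 := by
        by_contra hc
        push_neg at hc
        rw [Finset.sum_congr rfl (fun v _ => hc v), Finset.sum_const, Finset.card_univ,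
          smul_eq_mul] at hsum2
        omega
      obtain ⟨v0, hv0⟩ := hex
      have hn1 : 0 < Fintype.card V := Fintype.card_pos_iff.mpr ⟨v0⟩
      have hF6 : 6 ≤ F v0 := by
        obtain ⟨k, hk⟩ := hF_even v0
        have := hF4 v0
        omega
      have hsplit : F v0 + ∑ v ∈ Finset.univ.erase v0, F v = 4 * n + 2 := by
        rw [Finset.add_sum_erase _ _ (Finset.mem_univ v0)]; exact hsum2
      have hcarde : (Finset.univ.erase v0).card = n - 1 := by
        rw [Finset.card_erase_of_mem (Finset.mem_univ v0), Finset.card_univ]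
      have herase_ge : (n - 1) * 4 ≤ ∑ v ∈ Finset.univ.erase v0, F v := by
        calc (n - 1) * 4 = ∑ _v ∈ Finset.univ.erase v0, 4 := by
              rw [Finset.sum_const, smul_eq_mul, hcarde]
        _ ≤ _ := Finset.sum_le_sum (fun v _ => hF4 v)
      have hFv0 : F v0 = 6 := by omega
      have herase_eq : ∑ v ∈ Finset.univ.erase v0, F v = (n - 1) * 4 := by omega
      have hF4' : ∀ v : V, v ≠ v0 → F v = 4 := by
        intro v hv
        have hs : ∑ _v ∈ Finset.univ.erase v0, (4 : ℕ) = ∑ v ∈ Finset.univ.erase v0, F v := by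
          rw [Finset.sum_const, smul_eq_mul, hcarde, herase_eq]
        exact ((Finset.sum_eq_sum_iff_of_le (fun v _ => hF4 v)).mp hs v
          (Finset.mem_erase.mpr ⟨hv, Finset.mem_univ v⟩)).symm
      have hv0_le : ∀ e ∈ inc G v0, CCmult C e ≤ 2 := by
        intro e he
        obtain ⟨hEe, hve⟩ := mem_inc.mp he
        obtain ⟨u, hu_ne, hu_mem⟩ := other_endpoint hEe hve
        exact (key u (hF4' u hu_ne)).1 e (mem_inc.mpr ⟨hEe, hu_mem⟩)
      have hv0_eq : ∀ e ∈ inc G v0, CCmult C e = 2 := by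
        have h0 : ∑ e ∈ inc G v0, CCmult C e = F v0 := rfl
        have hs : ∑ e ∈ inc G v0, CCmult C e = ∑ _e ∈ inc G v0, 2 := by
          rw [Finset.sum_const, smul_eq_mul, hcard_inc v0, h0, hFv0]
        exact fun e he => (Finset.sum_eq_sum_iff_of_le hv0_le).mp hs e he
      have hbound : ∀ e, (C.onEdge e).ncard ≤ 2 := by
        apply hbound_of
        intro v e he
        by_cases hv : v = v0
        · exact (hv0_eq e (hv ▸ he)).le
        · exact (key v (hF4' v hv)).1 e he
      have hsingl : ∀ v : V, v ≠ v0 →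
          ((inc G v).filter fun e => 2 ≤ CCmult C e).card = 1 := by
        intro v hv
        obtain ⟨-, e0, ⟨he0s, he02⟩, huniq⟩ := key v (hF4' v hv)
        rw [Finset.card_eq_one]
        refine ⟨e0, ?_⟩
        ext e
        simp only [Finset.mem_filter, Finset.mem_singleton]
        constructor
        · rintro ⟨hes, h2⟩; exact huniq e hes h2
        · rintro rfl; exact ⟨he0s, he02⟩
      have hdeg_v0 : edgeDegree C.doubled v0 = 3 := by
        rw [hdegf v0, Finset.filter_true_of_mem (fun e he => (hv0_eq e he).ge)]
        exact hcard_inc v0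
      refine ⟨⟨?_, ?_, ?_⟩, hbound⟩
      · intro e he
        have h2 : 2 ≤ CCmult C e := (mem_doubled_iff C e).mp he
        exact hmu_mem e (by omega)
      · intro v
        by_cases hv : v = v0
        · subst hv
          exact Or.inr hdeg_v0
        · left
          rw [hdegf v]
          exact hsingl v hv
      · have hsetv : {v : V | edgeDegree C.doubled v = 3} = {v0} := by
          ext v
          simp only [Set.mem_setOf_eq, Set.mem_singleton_iff]
          constructor
          · intro hdv
            by_contra hv
            rw [hdegf v, hsingl v hv] at hdv
            omega
          · rintro rfl
            exact hdeg_v0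
        rw [hsetv, Set.ncard_singleton]
    · rintro ⟨⟨hsub, hdeg13, hcard1⟩, hbound⟩
      obtain ⟨v0, hset0⟩ := Set.ncard_eq_one.mp hcard1
      have hdeg_v0 : edgeDegree C.doubled v0 = 3 := by
        have h1 : v0 ∈ {v : V | edgeDegree C.doubled v = 3} := by rw [hset0]; rfl
        exact h1
      have hfilter : ((inc G v0).filter fun e => 2 ≤ CCmult C e) = inc G v0 := by
        apply Finset.eq_of_subset_of_card_le (Finset.filter_subset _ _)
        have h1 : ((inc G v0).filter fun e => 2 ≤ CCmult C e).card = 3 := by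
          rw [← hdegf v0]; exact hdeg_v0
        rw [h1, hcard_inc v0]
      have hv0_eq : ∀ e ∈ inc G v0, CCmult C e = 2 := by
        intro e he
        have h2 : 2 ≤ CCmult C e := by
          rw [← hfilter] at he
          exact (Finset.mem_filter.mp he).2
        have h1 : CCmult C e ≤ 2 := by rw [← hmu_eq]; exact hbound e
        omega
      have hFv0 : F v0 = 6 := by
        have h0 : F v0 = ∑ e ∈ inc G v0, CCmult C e := rfl
        rw [h0, Finset.sum_const_nat hv0_eq, hcard_inc v0]
      have hF4' : ∀ v : V, v ≠ v0 → F v = 4 := by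
        intro v hv
        have hd1 : edgeDegree C.doubled v = 1 := by
          rcases hdeg13 v with h1 | h1
          · exact h1
          · exfalso
            apply hv
            have h2 : v ∈ {v : V | edgeDegree C.doubled v = 3} := h1
            rw [hset0] at h2
            exact h2
        rw [hdegf v, Finset.card_eq_one] at hd1
        obtain ⟨e0, he0⟩ := hd1
        have he0m : e0 ∈ (inc G v).filter fun e => 2 ≤ CCmult C e := by
          rw [he0]; exact Finset.mem_singleton_self e0
        obtain ⟨he0s, he02⟩ := Finset.mem_filter.mp he0m
        refine hF4_of v ⟨e0, ⟨he0s, he02⟩, ?_⟩ (fun e _ => by rw [← hmu_eq]; exact hbound e)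
        intro e he h2
        have h3 : e ∈ ({e0} : Finset (Sym2 V)) := by
          rw [← he0]; exact Finset.mem_filter.mpr ⟨he, h2⟩
        exact Finset.mem_singleton.mp h3
      have hn1 : 0 < Fintype.card V := Fintype.card_pos_iff.mpr ⟨v0⟩
      have hsplit : ∑ v : V, F v = 4 * n + 2 := by
        rw [← Finset.add_sum_erase _ _ (Finset.mem_univ v0), hFv0,
          Finset.sum_const_nat (fun v hv => hF4' v (Finset.mem_erase.mp hv).1),
          Finset.card_erase_of_mem (Finset.mem_univ v0), Finset.card_univ]
        omega
      omega
end
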